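/- arXiv:1501.00684 — 9 statements merged into one kernel-verified Lean document; each statement's English description precedes it below -/
import Mathlib

section
/- There exists a constant C > 0 such that for all x₀, y₀ ∈ ℝ² one has ∫_{ℝ²} θ_{x₀}(x) θ_{y₀}(x) dx ≤ C · θ_{x₀}(y₀). -/
/-!
If `|y₀ - x₀| = d`, every `x` lies at distance at least `d / 2` from `x₀` or from `y₀`, and there
the corresponding weight is at most `8 θ_{x₀}(y₀)`. Hence pointwise
`θ_{x₀} θ_{y₀} ≤ 8 θ_{x₀}(y₀) (θ_{x₀} + θ_{y₀})`, and integrating gives the claim with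
`C = 16 ∫ θ₀`, which is finite because `1 / (1 + |x|³)` decays faster than `|x|⁻²` in the plane.
-/

open MeasureTheory

noncomputable def theta (x₀ x : EuclideanSpace ℝ (Fin 2)) : ℝ :=
  1 / (1 + ‖x - x₀‖ ^ 3)

lemma one_div_one_add_pow_le_of_le_two_mul (n : ℕ) {a d : ℝ} (hd : 0 ≤ d) (h : d ≤ 2 * a) :
    1 / (1 + a ^ n) ≤ 2 ^ n / (1 + d ^ n) := by
  have ha : 0 ≤ a := by linarith
  rw [div_le_div_iff₀ (by positivity) (by positivity)]
  have hdn : d ^ n ≤ 2 ^ n * a ^ n := by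
    rw [← mul_pow]
    exact pow_le_pow_left₀ hd h n
  nlinarith [one_le_pow₀ (M₀ := ℝ) one_le_two (n := n)]

lemma one_div_one_add_norm_pow_le {E : Type*} [SeminormedAddCommGroup E] (n : ℕ) (x : E) :
    1 / (1 + ‖x‖ ^ n) ≤ 2 ^ (n - 1) * (1 + ‖x‖) ^ (-(n : ℝ)) := by
  rw [Real.rpow_neg (by positivity), Real.rpow_natCast, ← div_eq_mul_inv,
    div_le_div_iff₀ (by positivity) (by positivity), one_mul]
  simpa using add_pow_le zero_le_one (norm_nonneg x) n

lemma integrable_one_div_one_add_norm_pow {E : Type*} [NormedAddCommGroup E] [NormedSpace ℝ E]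
    [FiniteDimensional ℝ E] [MeasurableSpace E] [BorelSpace E] (μ : Measure E)
    [μ.IsAddHaarMeasure] {n : ℕ} (hn : Module.finrank ℝ E < n) :
    Integrable (fun x ↦ 1 / (1 + ‖x‖ ^ n)) μ := by
  refine ((integrable_one_add_norm (r := n) (by exact_mod_cast hn)).const_mul
    (2 ^ (n - 1) : ℝ)).mono' (by fun_prop : Measurable _).aestronglyMeasurable
    (.of_forall fun x ↦ ?_)
  rw [Real.norm_of_nonneg (by positivity)]
  exact one_div_one_add_norm_pow_le n x

lemma theta_pos (x₀ x : EuclideanSpace ℝ (Fin 2)) : 0 < theta x₀ x := by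
  unfold theta; positivity

lemma theta_nonneg (x₀ x : EuclideanSpace ℝ (Fin 2)) : 0 ≤ theta x₀ x :=
  (theta_pos x₀ x).le

lemma continuous_theta (x₀ : EuclideanSpace ℝ (Fin 2)) : Continuous (theta x₀) :=
  continuous_const.div (by fun_prop) fun x ↦ by positivity

lemma theta_comm (x₀ y₀ : EuclideanSpace ℝ (Fin 2)) : theta x₀ y₀ = theta y₀ x₀ := by
  rw [theta, theta, norm_sub_rev]

lemma theta_le_of_norm_le_two_mul {x₀ y₀ x : EuclideanSpace ℝ (Fin 2)}
    (h : ‖y₀ - x₀‖ ≤ 2 * ‖x - x₀‖) : theta x₀ x ≤ 8 * theta x₀ y₀ := by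
  rw [theta, theta, mul_one_div]
  exact one_div_one_add_pow_le_of_le_two_mul 3 (norm_nonneg _) h |>.trans_eq (by norm_num)

lemma theta_mul_theta_le (x₀ y₀ x : EuclideanSpace ℝ (Fin 2)) :
    theta x₀ x * theta y₀ x ≤ 8 * theta x₀ y₀ * (theta x₀ x + theta y₀ x) := by
  have hx₀ := theta_nonneg x₀ x
  have hy₀ := theta_nonneg y₀ x
  have htri : ‖y₀ - x₀‖ ≤ ‖x - x₀‖ + ‖x - y₀‖ := by
    simpa using norm_sub_le (x - x₀) (x - y₀)
  rcases le_total ‖x - y₀‖ ‖x - x₀‖ with h | h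
  · have hle := theta_le_of_norm_le_two_mul (x₀ := x₀) (y₀ := y₀) (x := x) (by linarith)
    nlinarith
  · have hle := theta_le_of_norm_le_two_mul (x₀ := y₀) (y₀ := x₀) (x := x)
      (by rw [norm_sub_rev]; linarith)
    rw [theta_comm y₀ x₀] at hle
    nlinarith

lemma integrable_theta (z : EuclideanSpace ℝ (Fin 2)) : Integrable (theta z) :=
  (integrable_one_div_one_add_norm_pow volume (by simp)).comp_sub_right z

lemma integral_theta (z : EuclideanSpace ℝ (Fin 2)) : ∫ x, theta z x = ∫ x, theta 0 x := by
  rw [← integral_sub_right_eq_self (theta 0) z]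
  simp only [theta, sub_zero]

theorem theta_convolution_estimate :
    ∃ C : ℝ, 0 < C ∧ ∀ x₀ y₀ : EuclideanSpace ℝ (Fin 2),
      ∫⁻ x, ENNReal.ofReal (theta x₀ x * theta y₀ x) ≤
        ENNReal.ofReal (C * theta x₀ y₀) := by
  have hI : 0 < ∫ x, theta 0 x :=
    integral_pos_of_integrable_nonneg_nonzero (x := 0) (continuous_theta 0)
      (integrable_theta 0) (theta_nonneg 0) (theta_pos 0 0).ne'
  refine ⟨16 * ∫ x, theta 0 x, by positivity, fun x₀ y₀ ↦ ?_⟩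
  have hbound : Integrable fun x ↦ 8 * theta x₀ y₀ * (theta x₀ x + theta y₀ x) :=
    ((integrable_theta x₀).add (integrable_theta y₀)).const_mul _
  calc ∫⁻ x, ENNReal.ofReal (theta x₀ x * theta y₀ x)
      ≤ ∫⁻ x, ENNReal.ofReal (8 * theta x₀ y₀ * (theta x₀ x + theta y₀ x)) :=
        lintegral_mono fun x ↦ ENNReal.ofReal_le_ofReal (theta_mul_theta_le x₀ y₀ x)
    _ = ENNReal.ofReal (∫ x, 8 * theta x₀ y₀ * (theta x₀ x + theta y₀ x)) :=
        (ofReal_integral_eq_lintegral_ofReal hbound (.of_forall fun x ↦ by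
          have := theta_nonneg x₀ y₀; have := theta_nonneg x₀ x; have := theta_nonneg y₀ x
          positivity)).symm
    _ = ENNReal.ofReal (16 * (∫ x, theta 0 x) * theta x₀ y₀) := by
        rw [integral_const_mul, integral_add (integrable_theta x₀) (integrable_theta y₀),
          integral_theta x₀, integral_theta y₀]
        ring_nf
end

section
/- There exists a constant C > 0 such that for all R > 0 and all x₀, y₀ ∈ ℝ² one has ∫_{ℝ²} θ_{R,x₀}(x) θ_{R,y₀}(x) dx ≤ C · R⁻¹ · θ_{R,x₀}(y₀). -/
open MeasureTheory

noncomputable def thetaR (R : ℝ) (x₀ x : EuclideanSpace ℝ (Fin 2)) : ℝ :=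
  1 / (R ^ 3 + ‖x - x₀‖ ^ 3)

/-!
Writing `p = R³ + |x - x₀|³`, `q = R³ + |x - y₀|³`, `r = R³ + |y₀ - x₀|³`, the triangle inequality
and `(a + b)³ ≤ 4 (a³ + b³)` give `r ≤ 4 (p + q)`, hence
`1 / (p q) = (1/p + 1/q) / (p + q) ≤ 4 / r · (1/p + 1/q)`.
Integrating, the claim reduces to `∫ θ_{R,a} = R⁻¹ ∫ (1 + |y|³)⁻¹`, which follows by translating
and rescaling; the last integral is finite because the exponent `3` exceeds the dimension `2`.
-/

open Module

theorem inv_mul_inv_le_mul_inv_mul_inv_add {p q r c : ℝ} (hp : 0 < p) (hq : 0 < q) (hr : 0 < r)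
    (h : r ≤ c * (p + q)) : p⁻¹ * q⁻¹ ≤ c * r⁻¹ * (p⁻¹ + q⁻¹) := by
  have hpq : p⁻¹ * q⁻¹ = (p + q)⁻¹ * (p⁻¹ + q⁻¹) := by field_simp; ring
  rw [hpq]
  gcongr
  rwa [← div_eq_mul_inv, inv_le_iff_one_le_mul₀ (by positivity), div_mul_eq_mul_div,
    one_le_div₀ hr]

theorem inv_pow_add_norm_sub_pow_mul_le {E : Type*} [SeminormedAddCommGroup E] {R : ℝ}
    (hR : 0 < R) (n : ℕ) (a b x : E) :
    (R ^ n + ‖x - a‖ ^ n)⁻¹ * (R ^ n + ‖x - b‖ ^ n)⁻¹ ≤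
      2 ^ (n - 1) * (R ^ n + ‖b - a‖ ^ n)⁻¹ *
        ((R ^ n + ‖x - a‖ ^ n)⁻¹ + (R ^ n + ‖x - b‖ ^ n)⁻¹) := by
  refine inv_mul_inv_le_mul_inv_mul_inv_add (by positivity) (by positivity) (by positivity) ?_
  have hba : ‖b - a‖ ^ n ≤ 2 ^ (n - 1) * (‖x - a‖ ^ n + ‖x - b‖ ^ n) :=
    calc ‖b - a‖ ^ n ≤ (‖x - a‖ + ‖x - b‖) ^ n := by
          gcongr
          simpa using norm_sub_le (x - a) (x - b)
      _ ≤ _ := add_pow_le (norm_nonneg _) (norm_nonneg _) n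
  have h2 : (1 : ℝ) ≤ 2 ^ (n - 1) := one_le_pow₀ one_le_two
  nlinarith [pow_pos hR n]

theorem inv_pow_add_norm_pow_eq {E : Type*} [SeminormedAddCommGroup E] [NormedSpace ℝ E]
    {R : ℝ} (hR : 0 < R) (p : ℕ) (z : E) :
    (R ^ p + ‖z‖ ^ p)⁻¹ = (R ^ p)⁻¹ * (1 + ‖R⁻¹ • z‖ ^ p)⁻¹ := by
  rw [norm_smul, Real.norm_of_nonneg (inv_nonneg.2 hR.le), mul_pow, ← mul_inv, mul_add,
    inv_pow, mul_one, mul_inv_cancel_left₀ (by positivity)]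

section Integral

variable {E : Type*} [NormedAddCommGroup E] [NormedSpace ℝ E] [MeasurableSpace E] [BorelSpace E]
  [FiniteDimensional ℝ E] {μ : Measure E} [μ.IsAddHaarMeasure]

theorem integrable_inv_one_add_norm_pow {p : ℕ} (hp : finrank ℝ E < p) :
    Integrable (fun y : E ↦ (1 + ‖y‖ ^ p)⁻¹) μ := by
  refine ((integrable_one_add_norm (μ := μ) (r := p) (by exact_mod_cast hp)).const_mul
    (2 ^ (p - 1))).mono' (by fun_prop : Measurable _).aestronglyMeasurable
    (ae_of_all _ fun y ↦ ?_)
  rw [Real.rpow_neg (by positivity), Real.rpow_natCast, norm_inv,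
    Real.norm_of_nonneg (by positivity), ← div_eq_mul_inv, le_div_iff₀ (by positivity),
    inv_mul_le_iff₀ (by positivity)]
  simpa [mul_comm] using add_pow_le zero_le_one (norm_nonneg y) p

theorem integral_inv_one_add_norm_pow_pos {p : ℕ} (hp : finrank ℝ E < p) :
    0 < ∫ y, (1 + ‖y‖ ^ p)⁻¹ ∂μ := by
  refine (integral_pos_iff_support_of_nonneg (fun y ↦ by positivity)
    (integrable_inv_one_add_norm_pow hp)).2 ?_
  have hsupp : Function.support (fun y : E ↦ (1 + ‖y‖ ^ p)⁻¹) = Set.univ :=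
    Function.support_eq_univ fun y ↦ by positivity
  simpa [hsupp] using NeZero.ne (μ Set.univ)

theorem integrable_inv_pow_add_norm_sub_pow {p : ℕ} (hp : finrank ℝ E < p) {R : ℝ}
    (hR : 0 < R) (a : E) : Integrable (fun x ↦ (R ^ p + ‖x - a‖ ^ p)⁻¹) μ := by
  simp_rw [inv_pow_add_norm_pow_eq hR]
  exact (((integrable_inv_one_add_norm_pow hp).comp_smul (inv_ne_zero hR.ne')).comp_sub_right
    a).const_mul _

theorem integral_inv_pow_add_norm_sub_pow {R : ℝ} (hR : 0 < R) (p : ℕ) (a : E) :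
    ∫ x, (R ^ p + ‖x - a‖ ^ p)⁻¹ ∂μ = R ^ finrank ℝ E / R ^ p * ∫ y, (1 + ‖y‖ ^ p)⁻¹ ∂μ := by
  simp_rw [inv_pow_add_norm_pow_eq hR, integral_const_mul]
  rw [integral_sub_right_eq_self (fun z ↦ (1 + ‖R⁻¹ • z‖ ^ p)⁻¹) a,
    Measure.integral_comp_inv_smul_of_nonneg μ (fun y ↦ (1 + ‖y‖ ^ p)⁻¹) hR.le, smul_eq_mul]
  ring

end Integral

section Theta

variable {R : ℝ}

theorem thetaR_eq (a x : EuclideanSpace ℝ (Fin 2)) :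
    thetaR R a x = (R ^ 3 + ‖x - a‖ ^ 3)⁻¹ :=
  one_div _

theorem thetaR_nonneg (hR : 0 ≤ R) (a x : EuclideanSpace ℝ (Fin 2)) : 0 ≤ thetaR R a x := by
  rw [thetaR_eq]
  positivity

theorem integrable_thetaR (hR : 0 < R) (a : EuclideanSpace ℝ (Fin 2)) :
    Integrable (thetaR R a) := by
  simpa only [← thetaR_eq] using
    integrable_inv_pow_add_norm_sub_pow (μ := volume) (p := 3) (by simp) hR a

theorem integral_thetaR (hR : 0 < R) (a : EuclideanSpace ℝ (Fin 2)) :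
    ∫ x, thetaR R a x = R⁻¹ * ∫ y : EuclideanSpace ℝ (Fin 2), (1 + ‖y‖ ^ 3)⁻¹ := by
  simp_rw [thetaR_eq]
  rw [integral_inv_pow_add_norm_sub_pow hR, finrank_euclideanSpace_fin]
  field_simp

theorem thetaR_mul_thetaR_le (hR : 0 < R) (x₀ y₀ x : EuclideanSpace ℝ (Fin 2)) :
    thetaR R x₀ x * thetaR R y₀ x ≤ 4 * thetaR R x₀ y₀ * (thetaR R x₀ x + thetaR R y₀ x) := by
  simpa only [thetaR_eq, show (2 : ℝ) ^ (3 - 1) = 4 by norm_num] using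
    inv_pow_add_norm_sub_pow_mul_le hR 3 x₀ y₀ x

end Theta

theorem scaled_theta_convolution_estimate :
    ∃ C : ℝ, 0 < C ∧ ∀ R : ℝ, 0 < R → ∀ x₀ y₀ : EuclideanSpace ℝ (Fin 2),
      ∫⁻ x, ENNReal.ofReal (thetaR R x₀ x * thetaR R y₀ x) ≤
        ENNReal.ofReal (C * R⁻¹ * thetaR R x₀ y₀) := by
  set K := ∫ y : EuclideanSpace ℝ (Fin 2), (1 + ‖y‖ ^ 3)⁻¹ with hK_def
  have hK : 0 < K := integral_inv_one_add_norm_pow_pos (by simp)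
  refine ⟨8 * K, by positivity, fun R hR x₀ y₀ ↦ ?_⟩
  have hθ := thetaR_nonneg hR.le
  calc ∫⁻ x, ENNReal.ofReal (thetaR R x₀ x * thetaR R y₀ x)
      ≤ ∫⁻ x, ENNReal.ofReal (4 * thetaR R x₀ y₀ * (thetaR R x₀ x + thetaR R y₀ x)) :=
        lintegral_mono fun x ↦ ENNReal.ofReal_le_ofReal (thetaR_mul_thetaR_le hR x₀ y₀ x)
    _ = ENNReal.ofReal (∫ x, 4 * thetaR R x₀ y₀ * (thetaR R x₀ x + thetaR R y₀ x)) := by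
        refine (ofReal_integral_eq_lintegral_ofReal ?_ (ae_of_all _ fun x ↦ ?_)).symm
        · exact ((integrable_thetaR hR x₀).add (integrable_thetaR hR y₀)).const_mul _
        · exact mul_nonneg (mul_nonneg zero_le_four (hθ x₀ y₀))
            (add_nonneg (hθ x₀ x) (hθ y₀ x))
    _ = ENNReal.ofReal (8 * K * R⁻¹ * thetaR R x₀ y₀) := by
        rw [integral_const_mul, integral_add (integrable_thetaR hR x₀) (integrable_thetaR hR y₀),
          integral_thetaR hR, integral_thetaR hR, ← hK_def]
        congr 1
        ring
end

section
/- Let 1 ≤ p < ∞, R > 0, μ ≥ 0 and C_φ ≥ 1. Then there exist constants C₁, C₂ > 0, depending only on p, R, μ, C_φ, such that for every weight function φ of exponential growth rate μ with constant C_φ and every measurable u : ℝ² → ℝ one has C₁ ∫_{ℝ²} φ(x₀) ( ∫_{B_R(x₀)} |u(x)|ᵖ dx ) dx₀ ≤ ∫_{ℝ²} φ(x)|u(x)|ᵖ dx ≤ C₂ ∫_{ℝ²} φ(x₀) ( ∫_{B_R(x₀)} |u(x)|ᵖ dx ) dx₀ (inequalities in [0,∞]). -/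
/-!
On a ball of radius `R` a weight varies at most by the factor `K = Cφ e^{μR}`. By Tonelli, the
ball-averaged integral equals `∫ |u(x)|ᵖ (∫_{B_R(x)} φ) dx`, and the inner integral lies between
`K⁻¹ |B_R| φ(x)` and `K |B_R| φ(x)`.
-/

open MeasureTheory

/-- A positive function `φ` on `ℝ²` is a weight function of exponential growth rate `μ ≥ 0`
with constant `Cφ` if `φ(x+y) ≤ Cφ e^{μ|y|} φ(x)` for all `x, y`. -/
def IsWeight (μ Cφ : ℝ) (φ : EuclideanSpace ℝ (Fin 2) → ℝ) : Prop :=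
  (∀ x, 0 < φ x) ∧ ∀ x y, φ (x + y) ≤ Cφ * Real.exp (μ * ‖y‖) * φ x

open scoped ENNReal
open Metric

section BallIntegral

variable {X : Type*} [PseudoMetricSpace X] [MeasurableSpace X] [OpensMeasurableSpace X]
  [SecondCountableTopology X] {ν : Measure X} [SFinite ν] {f g : X → ℝ≥0∞} {R : ℝ}

theorem lintegral_mul_setLIntegral_ball_comm (hf : Measurable f) (hg : Measurable g) :
    ∫⁻ x₀, g x₀ * ∫⁻ x in ball x₀ R, f x ∂ν ∂ν = ∫⁻ x, f x * ∫⁻ x₀ in ball x R, g x₀ ∂ν ∂ν := by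
  have hS : MeasurableSet {q : X × X | dist q.2 q.1 < R} :=
    measurableSet_lt (by fun_prop) measurable_const
  set F : X × X → ℝ≥0∞ := {q : X × X | dist q.2 q.1 < R}.indicator fun q => g q.1 * f q.2
  have hF : Measurable F := ((hg.comp measurable_fst).mul (hf.comp measurable_snd)).indicator hS
  calc ∫⁻ x₀, g x₀ * ∫⁻ x in ball x₀ R, f x ∂ν ∂ν = ∫⁻ x₀, ∫⁻ x, F (x₀, x) ∂ν ∂ν := by
        refine lintegral_congr fun x₀ => ?_
        rw [← lintegral_const_mul _ hf, ← lintegral_indicator measurableSet_ball]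
        rfl
    _ = ∫⁻ x, ∫⁻ x₀, F (x₀, x) ∂ν ∂ν := lintegral_lintegral_swap hF.aemeasurable
    _ = ∫⁻ x, f x * ∫⁻ x₀ in ball x R, g x₀ ∂ν ∂ν := by
        refine lintegral_congr fun x => ?_
        rw [mul_comm, ← lintegral_mul_const _ hg, ← lintegral_indicator measurableSet_ball]
        refine lintegral_congr fun x₀ => ?_
        simp only [F, Set.indicator, Set.mem_ofPred_eq, mem_ball, dist_comm]

theorem lintegral_mul_setLIntegral_ball_le {K V : ℝ≥0∞} (hf : Measurable f) (hg : Measurable g)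
    (hgK : ∀ x y, dist y x < R → g y ≤ K * g x) (hV : ∀ x, ν (ball x R) ≤ V) :
    ∫⁻ x₀, g x₀ * ∫⁻ x in ball x₀ R, f x ∂ν ∂ν ≤ K * V * ∫⁻ x, g x * f x ∂ν := by
  rw [lintegral_mul_setLIntegral_ball_comm hf hg,
    ← lintegral_const_mul (f := fun x => g x * f x) _ (hg.mul hf)]
  refine lintegral_mono fun x => ?_
  calc f x * ∫⁻ x₀ in ball x R, g x₀ ∂ν ≤ f x * (K * g x * V) := by
        gcongr
        calc ∫⁻ x₀ in ball x R, g x₀ ∂ν ≤ ∫⁻ _ in ball x R, K * g x ∂ν :=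
              setLIntegral_mono' measurableSet_ball fun y hy => hgK x y hy
          _ = K * g x * ν (ball x R) := setLIntegral_const _ _
          _ ≤ K * g x * V := by gcongr; exact hV x
    _ = K * V * (g x * f x) := by ring

theorem lintegral_mul_le_setLIntegral_ball {K V : ℝ≥0∞} (hf : Measurable f) (hg : Measurable g)
    (hK : K ≠ ∞) (hgK : ∀ x y, dist y x < R → g y ≤ K * g x) (hV : ∀ x, V ≤ ν (ball x R)) :
    V * ∫⁻ x, g x * f x ∂ν ≤ K * ∫⁻ x₀, g x₀ * ∫⁻ x in ball x₀ R, f x ∂ν ∂ν := by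
  rw [lintegral_mul_setLIntegral_ball_comm hf hg,
    ← lintegral_const_mul (f := fun x => g x * f x) _ (hg.mul hf), ← lintegral_const_mul' _ _ hK]
  refine lintegral_mono fun x => ?_
  calc V * (g x * f x) ≤ f x * (ν (ball x R) * g x) := by
        rw [mul_comm (f x), ← mul_assoc]; gcongr; exact hV x
    _ = f x * ∫⁻ _ in ball x R, g x ∂ν := by rw [setLIntegral_const, mul_comm (ν _)]
    _ ≤ f x * ∫⁻ x₀ in ball x R, K * g x₀ ∂ν := by
        gcongr f x * ?_
        exact setLIntegral_mono' measurableSet_ball fun y hy => hgK y x (mem_ball'.1 hy)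
    _ = K * (f x * ∫⁻ x₀ in ball x R, g x₀ ∂ν) := by rw [lintegral_const_mul _ hg]; ring

end BallIntegral

namespace IsWeight

variable {μ Cφ : ℝ} {φ : EuclideanSpace ℝ (Fin 2) → ℝ}

theorem one_le_const (hφ : IsWeight μ Cφ φ) : 1 ≤ Cφ := by
  have h := hφ.2 0 0
  simp only [add_zero, norm_zero, mul_zero, Real.exp_zero, mul_one] at h
  exact (le_mul_iff_one_le_left (hφ.1 0)).1 h

theorem le_mul_of_dist_lt (hφ : IsWeight μ Cφ φ) (hμ : 0 ≤ μ) {x y : EuclideanSpace ℝ (Fin 2)}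
    {R : ℝ} (h : dist y x < R) : φ y ≤ Cφ * Real.exp (μ * R) * φ x := by
  have hy := hφ.2 x (y - x)
  rw [add_sub_cancel] at hy
  have hCφ := hφ.one_le_const
  have hφx := hφ.1 x
  refine hy.trans ?_
  gcongr
  rw [← dist_eq_norm]
  exact h.le

end IsWeight

theorem weighted_norm_equivalence_general (p R μ Cφ : ℝ) (hR : 0 < R)
    (hμ : 0 ≤ μ) (hCφ : 1 ≤ Cφ) :
    ∃ C₁ C₂ : ℝ, 0 < C₁ ∧ 0 < C₂ ∧
      ∀ φ : EuclideanSpace ℝ (Fin 2) → ℝ, IsWeight μ Cφ φ → Measurable φ →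
      ∀ u : EuclideanSpace ℝ (Fin 2) → ℝ, Measurable u →
        ENNReal.ofReal C₁ *
            ∫⁻ x₀, ENNReal.ofReal (φ x₀) *
              ∫⁻ x in Metric.ball x₀ R, ENNReal.ofReal (|u x| ^ p) ≤
          ∫⁻ x, ENNReal.ofReal (φ x) * ENNReal.ofReal (|u x| ^ p) ∧
        ∫⁻ x, ENNReal.ofReal (φ x) * ENNReal.ofReal (|u x| ^ p) ≤
          ENNReal.ofReal C₂ *
            ∫⁻ x₀, ENNReal.ofReal (φ x₀) *
              ∫⁻ x in Metric.ball x₀ R, ENNReal.ofReal (|u x| ^ p) := by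
  set K := Cφ * Real.exp (μ * R)
  set V := (volume (ball (0 : EuclideanSpace ℝ (Fin 2)) R)).toReal
  have hK : 0 < K := by positivity
  have hV : 0 < V := ENNReal.toReal_pos (measure_ball_pos _ _ hR).ne' measure_ball_lt_top.ne
  have hball (x : EuclideanSpace ℝ (Fin 2)) : volume (ball x R) = ENNReal.ofReal V := by
    rw [Measure.addHaar_ball_center, ENNReal.ofReal_toReal measure_ball_lt_top.ne]
  refine ⟨(K * V)⁻¹, K / V, by positivity, by positivity, fun φ hφ hφm u hu => ?_⟩
  have hf : Measurable fun x => ENNReal.ofReal (|u x| ^ p) := (hu.abs.pow_const p).ennreal_ofReal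
  have hgK (x y) (h : dist y x < R) :
      ENNReal.ofReal (φ y) ≤ ENNReal.ofReal K * ENNReal.ofReal (φ x) := by
    rw [← ENNReal.ofReal_mul hK.le]
    exact ENNReal.ofReal_le_ofReal (hφ.le_mul_of_dist_lt hμ h)
  have upper := lintegral_mul_setLIntegral_ball_le hf hφm.ennreal_ofReal hgK fun x => (hball x).le
  have lower := lintegral_mul_le_setLIntegral_ball hf hφm.ennreal_ofReal ENNReal.ofReal_ne_top hgK
    fun x => (hball x).ge
  constructor
  · rw [ENNReal.ofReal_inv_of_pos (by positivity), ENNReal.ofReal_mul hK.le,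
      ENNReal.inv_mul_le_iff (by simp [hK, hV]) (by finiteness)]
    exact upper
  · rw [ENNReal.ofReal_div_of_pos hV, ← ENNReal.mul_div_right_comm,
      ENNReal.le_div_iff_mul_le (by simp [hV]) (by simp), mul_comm]
    exact lower

theorem weighted_norm_equivalence (p R μ Cφ : ℝ) (hp : 1 ≤ p) (hR : 0 < R)
    (hμ : 0 ≤ μ) (hCφ : 1 ≤ Cφ) :
    ∃ C₁ C₂ : ℝ, 0 < C₁ ∧ 0 < C₂ ∧
      ∀ φ : EuclideanSpace ℝ (Fin 2) → ℝ, IsWeight μ Cφ φ → Measurable φ →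
      ∀ u : EuclideanSpace ℝ (Fin 2) → ℝ, Measurable u →
        ENNReal.ofReal C₁ *
            ∫⁻ x₀, ENNReal.ofReal (φ x₀) *
              ∫⁻ x in Metric.ball x₀ R, ENNReal.ofReal (|u x| ^ p) ≤
          ∫⁻ x, ENNReal.ofReal (φ x) * ENNReal.ofReal (|u x| ^ p) ∧
        ∫⁻ x, ENNReal.ofReal (φ x) * ENNReal.ofReal (|u x| ^ p) ≤
          ENNReal.ofReal C₂ *
            ∫⁻ x₀, ENNReal.ofReal (φ x₀) *
              ∫⁻ x in Metric.ball x₀ R, ENNReal.ofReal (|u x| ^ p) :=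
  weighted_norm_equivalence_general p R μ Cφ hR hμ hCφ
end

section
/- Let 1 ≤ p < ∞, μ ≥ 0, C_φ ≥ 1. There exists a constant C > 0, depending only on p, μ, C_φ, such that for every weight function φ of exponential growth rate μ with constant C_φ satisfying ∫_{ℝ²} φ(x) dx < ∞, and every measurable u : ℝ² → ℝ, one has ∫_{ℝ²} φ(x)|u(x)|ᵖ dx ≤ C · ( ∫_{ℝ²} φ(x) dx ) · sup_{x₀ ∈ ℝ²} ∫_{B_1(x₀)} |u(x)|ᵖ dx (in [0,∞]). -/
open MeasureTheory
open scoped ENNReal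

theorem weighted_le_uniformly_local (p μ Cφ : ℝ) (hp : 1 ≤ p)
    (hμ : 0 ≤ μ) (hCφ : 1 ≤ Cφ) :
    ∃ C : ℝ, 0 < C ∧
      ∀ φ : EuclideanSpace ℝ (Fin 2) → ℝ,
        IsWeight μ Cφ φ → Measurable φ →
        (∫⁻ x, ENNReal.ofReal (φ x)) < ⊤ →
      ∀ u : EuclideanSpace ℝ (Fin 2) → ℝ, Measurable u →
        ∫⁻ x, ENNReal.ofReal (φ x) * ENNReal.ofReal (|u x| ^ p) ≤
          ENNReal.ofReal C * (∫⁻ x, ENNReal.ofReal (φ x)) *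
            ⨆ x₀ : EuclideanSpace ℝ (Fin 2),
              ∫⁻ x in Metric.ball x₀ 1, ENNReal.ofReal (|u x| ^ p) := by
  classical
  set V : ℝ≥0∞ := volume (Metric.ball (0 : EuclideanSpace ℝ (Fin 2)) 1) with hV
  have hV0 : V ≠ 0 := (Metric.measure_ball_pos volume 0 one_pos).ne'
  have hVtop : V ≠ ⊤ := measure_ball_lt_top.ne
  have hVt : 0 < V.toReal := ENNReal.toReal_pos hV0 hVtop
  set K : ℝ≥0∞ := ENNReal.ofReal (Cφ * Real.exp μ) with hK
  have hKtop : K ≠ ⊤ := ENNReal.ofReal_ne_top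
  have hC0 : 0 < Cφ * Real.exp μ :=
    mul_pos (lt_of_lt_of_le one_pos hCφ) (Real.exp_pos μ)
  refine ⟨(Cφ * Real.exp μ) / V.toReal, div_pos hC0 hVt, ?_⟩
  intro φ hw hφm hφint u hu
  have hCexp : ENNReal.ofReal ((Cφ * Real.exp μ) / V.toReal) = K * V⁻¹ := by
    rw [ENNReal.ofReal_div_of_pos hVt, ENNReal.ofReal_toReal hVtop, div_eq_mul_inv]
  have hball : ∀ x : EuclideanSpace ℝ (Fin 2), volume (Metric.ball x 1) = V := fun x => by
    rw [hV, Measure.addHaar_ball_center]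
  -- pointwise bound: φ x ≤ Cφ e^μ φ z for z ∈ ball x 1
  have hpt : ∀ x z : EuclideanSpace ℝ (Fin 2), z ∈ Metric.ball x 1 →
      ENNReal.ofReal (φ x) ≤ K * ENNReal.ofReal (φ z) := by
    intro x z hz
    have h1 : φ x ≤ Cφ * Real.exp (μ * ‖x - z‖) * φ z := by
      have := hw.2 z (x - z)
      simpa using this
    have hdist : ‖x - z‖ < 1 := by
      rw [← dist_eq_norm, dist_comm]
      exact Metric.mem_ball.mp hz
    have h2 : Cφ * Real.exp (μ * ‖x - z‖) * φ z ≤ Cφ * Real.exp μ * φ z := by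
      have : Real.exp (μ * ‖x - z‖) ≤ Real.exp μ := by
        apply Real.exp_le_exp.mpr
        calc μ * ‖x - z‖ ≤ μ * 1 := by
              apply mul_le_mul_of_nonneg_left hdist.le hμ
          _ = μ := mul_one μ
      have hφz := (hw.1 z).le
      exact mul_le_mul_of_nonneg_right (mul_le_mul_of_nonneg_left this (by linarith)) hφz
    calc ENNReal.ofReal (φ x) ≤ ENNReal.ofReal (Cφ * Real.exp μ * φ z) :=
          ENNReal.ofReal_le_ofReal (h1.trans h2)
      _ = K * ENNReal.ofReal (φ z) := ENNReal.ofReal_mul hC0.le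
  have claimA : ∀ x, ENNReal.ofReal (φ x) ≤
      V⁻¹ * (K * ∫⁻ z in Metric.ball x 1, ENNReal.ofReal (φ z)) := by
    intro x
    have h1 : ENNReal.ofReal (φ x) * V ≤ K * ∫⁻ z in Metric.ball x 1, ENNReal.ofReal (φ z) := by
      have heq : ∫⁻ _ in Metric.ball x 1, ENNReal.ofReal (φ x) = ENNReal.ofReal (φ x) * V := by
        rw [setLIntegral_const, hball]
      rw [← heq, ← lintegral_const_mul' _ _ hKtop]
      exact setLIntegral_mono (hφm.ennreal_ofReal.const_mul _) (fun z hz => hpt x z hz)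
    calc ENNReal.ofReal (φ x) = V⁻¹ * (ENNReal.ofReal (φ x) * V) := by
          rw [mul_comm (ENNReal.ofReal (φ x)) V, ← mul_assoc, ENNReal.inv_mul_cancel hV0 hVtop,
            one_mul]
      _ ≤ V⁻¹ * (K * ∫⁻ z in Metric.ball x 1, ENNReal.ofReal (φ z)) :=
          mul_le_mul_right h1 _
  set S : ℝ≥0∞ := ⨆ x₀ : EuclideanSpace ℝ (Fin 2),
      ∫⁻ x in Metric.ball x₀ 1, ENNReal.ofReal (|u x| ^ p) with hS
  set f : EuclideanSpace ℝ (Fin 2) → EuclideanSpace ℝ (Fin 2) → ℝ≥0∞ := fun x z =>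
    (Metric.ball x 1).indicator (fun z => ENNReal.ofReal (φ z)) z * ENNReal.ofReal (|u x| ^ p)
    with hf
  have hfm : AEMeasurable (Function.uncurry f) (volume.prod volume) := by
    apply Measurable.aemeasurable
    have hs : MeasurableSet {q : EuclideanSpace ℝ (Fin 2) × EuclideanSpace ℝ (Fin 2) |
        dist q.2 q.1 < 1} :=
      measurableSet_lt (measurable_dist.comp (measurable_snd.prodMk measurable_fst))
        measurable_const
    have : Function.uncurry f = fun q : EuclideanSpace ℝ (Fin 2) × EuclideanSpace ℝ (Fin 2) =>
        ({q : EuclideanSpace ℝ (Fin 2) × EuclideanSpace ℝ (Fin 2) | dist q.2 q.1 < 1}).indicator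
          (fun q => ENNReal.ofReal (φ q.2)) q * ENNReal.ofReal (|u q.1| ^ p) := by
      funext q
      simp only [Function.uncurry, hf, Set.indicator, Metric.mem_ball, Set.mem_setOf_eq]
    rw [this]
    exact ((hφm.comp measurable_snd).ennreal_ofReal.indicator hs).mul
      (((hu.comp measurable_fst).abs.pow_const p).ennreal_ofReal)
  -- step 1: the LHS is bounded by the double integral
  have step1 : ∫⁻ x, ENNReal.ofReal (φ x) * ENNReal.ofReal (|u x| ^ p) ≤
      V⁻¹ * K * ∫⁻ x, ∫⁻ z, f x z := by
    rw [← lintegral_const_mul' _ _ (by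
      exact ENNReal.mul_ne_top (ENNReal.inv_ne_top.mpr hV0) hKtop)]
    apply lintegral_mono
    intro x
    show ENNReal.ofReal (φ x) * ENNReal.ofReal (|u x| ^ p) ≤ V⁻¹ * K * ∫⁻ z, f x z
    have : ∫⁻ z, f x z = (∫⁻ z in Metric.ball x 1, ENNReal.ofReal (φ z)) *
        ENNReal.ofReal (|u x| ^ p) := by
      rw [hf]
      rw [lintegral_mul_const _ (by
        exact (hφm.ennreal_ofReal).indicator Metric.isOpen_ball.measurableSet),
        lintegral_indicator Metric.isOpen_ball.measurableSet]
    rw [this, ← mul_assoc, mul_assoc V⁻¹ K]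
    exact mul_le_mul_left (claimA x) _
  -- step 2: swap and bound by sup
  have step2 : ∫⁻ x, ∫⁻ z, f x z ≤ (∫⁻ x, ENNReal.ofReal (φ x)) * S := by
    rw [lintegral_lintegral_swap hfm]
    have hswap : ∀ z, ∫⁻ x, f x z =
        ENNReal.ofReal (φ z) * ∫⁻ x in Metric.ball z 1, ENNReal.ofReal (|u x| ^ p) := by
      intro z
      have : ∀ x, f x z = ENNReal.ofReal (φ z) *
          (Metric.ball z 1).indicator (fun x => ENNReal.ofReal (|u x| ^ p)) x := by
        intro x
        simp only [hf, Set.indicator, Metric.mem_ball]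
        rw [dist_comm]
        by_cases h : dist x z < 1 <;> simp [h, mul_comm]
      simp_rw [this]
      rw [lintegral_const_mul' _ _ ENNReal.ofReal_ne_top,
        lintegral_indicator Metric.isOpen_ball.measurableSet]
    simp_rw [hswap]
    calc ∫⁻ z, ENNReal.ofReal (φ z) * ∫⁻ x in Metric.ball z 1, ENNReal.ofReal (|u x| ^ p)
        ≤ ∫⁻ z, ENNReal.ofReal (φ z) * S := by
          apply lintegral_mono
          intro z
          exact mul_le_mul_right (le_iSup (fun x₀ => ∫⁻ x in Metric.ball x₀ 1,
            ENNReal.ofReal (|u x| ^ p)) z) _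
      _ = (∫⁻ z, ENNReal.ofReal (φ z)) * S := lintegral_mul_const _ hφm.ennreal_ofReal
  calc ∫⁻ x, ENNReal.ofReal (φ x) * ENNReal.ofReal (|u x| ^ p)
      ≤ V⁻¹ * K * ∫⁻ x, ∫⁻ z, f x z := step1
    _ ≤ V⁻¹ * K * ((∫⁻ x, ENNReal.ofReal (φ x)) * S) := mul_le_mul_right step2 _
    _ = ENNReal.ofReal ((Cφ * Real.exp μ) / V.toReal) * (∫⁻ x, ENNReal.ofReal (φ x)) * S := by
        rw [hCexp]; ring
end

section
/- Let 1 ≤ p < ∞ and κ ≥ 1. There exists a constant C_κ > 0, depending only on p and κ and independent of R, such that for every R > 0, every x₀ ∈ ℝ² and every measurable u : ℝ² → ℝ: ∫_{ℝ²} θ_{R,x₀}(x) ( ∫_{B_{κR}(x)} |u(y)|ᵖ dy ) dx ≤ C_κ ∫_{ℝ²} θ_{R,x₀}(x) ( ∫_{B_R(x)} |u(y)|ᵖ dy ) dx (inequality in [0,∞]). -/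
open MeasureTheory

local notation "E2" => EuclideanSpace ℝ (Fin 2)

lemma thetaR_meas (R : ℝ) (x₀ : E2) :
    Measurable fun x => ENNReal.ofReal (thetaR R x₀ x) := by
  apply Measurable.ennreal_ofReal
  unfold thetaR
  fun_prop

/-- Tonelli swap for ball-weighted integrals. -/
lemma lint_ball_swap (r : ℝ) (θ f : E2 → ENNReal) (hθ : Measurable θ) (hf : Measurable f) :
    ∫⁻ x, θ x * ∫⁻ y in Metric.ball x r, f y =
      ∫⁻ y, f y * ∫⁻ x in Metric.ball y r, θ x := by
  have hS : MeasurableSet {p : E2 × E2 | dist p.1 p.2 < r} :=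
    (isOpen_lt (continuous_dist) continuous_const).measurableSet
  have hmeas : AEMeasurable (Function.uncurry fun x y =>
      {p : E2 × E2 | dist p.1 p.2 < r}.indicator (fun p => θ p.1 * f p.2) (x, y))
      ((volume : Measure E2).prod volume) := by
    apply Measurable.aemeasurable
    have : (Function.uncurry fun x y =>
        {p : E2 × E2 | dist p.1 p.2 < r}.indicator (fun p => θ p.1 * f p.2) (x, y)) =
        {p : E2 × E2 | dist p.1 p.2 < r}.indicator (fun p => θ p.1 * f p.2) := by
      funext p; rfl
    rw [this]
    exact (Measurable.mul (hθ.comp measurable_fst) (hf.comp measurable_snd)).indicator hS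
  have h1 : ∀ x : E2, θ x * ∫⁻ y in Metric.ball x r, f y =
      ∫⁻ y, {p : E2 × E2 | dist p.1 p.2 < r}.indicator (fun p => θ p.1 * f p.2) (x, y) := by
    intro x
    rw [← lintegral_const_mul _ hf, ← lintegral_indicator measurableSet_ball]
    congr 1
    funext y
    by_cases hy : y ∈ Metric.ball x r
    · rw [Set.indicator_of_mem hy, Set.indicator_of_mem (by simpa [dist_comm] using hy)]
    · rw [Set.indicator_of_notMem hy, Set.indicator_of_notMem (by simpa [dist_comm] using hy)]
  have h2 : ∀ y : E2, f y * ∫⁻ x in Metric.ball y r, θ x =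
      ∫⁻ x, {p : E2 × E2 | dist p.1 p.2 < r}.indicator (fun p => θ p.1 * f p.2) (x, y) := by
    intro y
    rw [← lintegral_const_mul _ hθ, ← lintegral_indicator measurableSet_ball]
    congr 1
    funext x
    by_cases hx : x ∈ Metric.ball y r
    · rw [Set.indicator_of_mem hx, Set.indicator_of_mem (by simpa [dist_comm] using hx)]
      ring
    · rw [Set.indicator_of_notMem hx, Set.indicator_of_notMem (by simpa [dist_comm] using hx)]
  simp only [h1, h2]
  exact lintegral_lintegral_swap hmeas

/-- Pointwise comparability of the weight. -/
lemma theta_compare (R κ : ℝ) (hR : 0 < R) (hκ : 1 ≤ κ) (x₀ y x x' : E2)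
    (hx : x ∈ Metric.ball y (κ * R)) (hx' : x' ∈ Metric.ball y R) :
    thetaR R x₀ x ≤ (1 + 4 * (κ + 1) ^ 3) * thetaR R x₀ x' := by
  have hb : (0:ℝ) < (κ + 1) * R := mul_pos (by linarith) hR
  have hd : ‖x' - x₀‖ ≤ ‖x - x₀‖ + (κ + 1) * R := by
    have h1 : dist x' x₀ ≤ dist x' x + dist x x₀ := dist_triangle x' x x₀
    have h2 : dist x' x ≤ dist x' y + dist y x := dist_triangle x' y x
    rw [Metric.mem_ball] at hx hx'
    rw [dist_comm] at hx
    rw [dist_eq_norm, dist_eq_norm, dist_eq_norm] at h1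
    rw [dist_eq_norm] at h2
    linarith [h1, h2, hx, hx']
  have ha : (0:ℝ) ≤ ‖x - x₀‖ := norm_nonneg _
  have hc : (0:ℝ) ≤ ‖x' - x₀‖ := norm_nonneg _
  have hcube : ‖x' - x₀‖ ^ 3 ≤ (‖x - x₀‖ + (κ + 1) * R) ^ 3 := pow_le_pow_left₀ hc hd 3
  have hcube2 : (‖x - x₀‖ + (κ + 1) * R) ^ 3 ≤ 4 * (‖x - x₀‖ ^ 3 + ((κ + 1) * R) ^ 3) := by
    nlinarith [mul_nonneg (add_nonneg ha hb.le) (sq_nonneg (‖x - x₀‖ - (κ+1)*R))]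
  have hb3 : ((κ + 1) * R) ^ 3 = (κ + 1) ^ 3 * R ^ 3 := mul_pow _ _ _
  have h1k : (1:ℝ) ≤ (κ + 1) ^ 3 := one_le_pow₀ (by linarith)
  have hden : R ^ 3 + ‖x' - x₀‖ ^ 3 ≤ (1 + 4 * (κ + 1) ^ 3) * (R ^ 3 + ‖x - x₀‖ ^ 3) := by
    nlinarith [pow_pos hR 3, pow_nonneg ha 3,
      mul_nonneg (pow_nonneg ha 3) (by nlinarith : (0:ℝ) ≤ 4 * (κ + 1) ^ 3 - 3)]
  have hpa : (0:ℝ) < R ^ 3 + ‖x - x₀‖ ^ 3 := by positivity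
  have hpc : (0:ℝ) < R ^ 3 + ‖x' - x₀‖ ^ 3 := by positivity
  unfold thetaR
  rw [mul_one_div, div_le_div_iff₀ hpa hpc, one_mul]
  linarith [hden]

/-- Comparison of ball integrals of the weight. -/
lemma ball_integral_compare (R κ : ℝ) (hR : 0 < R) (hκ : 1 ≤ κ) (x₀ y : E2) :
    ∫⁻ x in Metric.ball y (κ * R), ENNReal.ofReal (thetaR R x₀ x) ≤
      ENNReal.ofReal (κ ^ 2 * (1 + 4 * (κ + 1) ^ 3)) *
        ∫⁻ x in Metric.ball y R, ENNReal.ofReal (thetaR R x₀ x) := by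
  set C : ℝ := 1 + 4 * (κ + 1) ^ 3 with hC
  have hCpos : (0:ℝ) < C := by positivity
  set A := ∫⁻ x in Metric.ball y (κ * R), ENNReal.ofReal (thetaR R x₀ x) with hA
  set B := ∫⁻ x in Metric.ball y R, ENNReal.ofReal (thetaR R x₀ x) with hB
  have hv : volume (Metric.ball y R) = ENNReal.ofReal (R ^ 2) * volume (Metric.ball (0:E2) 1) := by
    have := Measure.addHaar_ball (volume : Measure E2) y hR.le
    simpa using this
  have hw : volume (Metric.ball y (κ * R)) =
      ENNReal.ofReal (κ ^ 2) * volume (Metric.ball y R) := by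
    have h1 := Measure.addHaar_ball (volume : Measure E2) y
      (by positivity : (0:ℝ) ≤ κ * R)
    rw [hv, h1]
    rw [← mul_assoc, ← ENNReal.ofReal_mul (by positivity)]
    congr 2
    · simpa using (mul_pow κ R 2)
  have key : A * volume (Metric.ball y R) ≤
      ENNReal.ofReal C * volume (Metric.ball y (κ * R)) * B := by
    have step1 : A * volume (Metric.ball y R) =
        ∫⁻ _x' in Metric.ball y R, A := (setLIntegral_const _ _).symm
    rw [step1]
    have step2 : ∀ x' ∈ Metric.ball y R,
        A ≤ ENNReal.ofReal C * volume (Metric.ball y (κ * R)) * ENNReal.ofReal (thetaR R x₀ x') := by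
      intro x' hx'
      rw [hA]
      calc ∫⁻ x in Metric.ball y (κ * R), ENNReal.ofReal (thetaR R x₀ x)
          ≤ ∫⁻ _x in Metric.ball y (κ * R), ENNReal.ofReal (C * thetaR R x₀ x') := by
            apply setLIntegral_mono_ae measurable_const.aemeasurable
            filter_upwards [] with x hx
            exact ENNReal.ofReal_le_ofReal (theta_compare R κ hR hκ x₀ y x x' hx hx')
        _ = ENNReal.ofReal (C * thetaR R x₀ x') * volume (Metric.ball y (κ * R)) :=
            setLIntegral_const _ _
        _ = ENNReal.ofReal C * volume (Metric.ball y (κ * R)) * ENNReal.ofReal (thetaR R x₀ x') := by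
            rw [ENNReal.ofReal_mul hCpos.le]; ring
    calc ∫⁻ _x' in Metric.ball y R, A
        ≤ ∫⁻ x' in Metric.ball y R,
            ENNReal.ofReal C * volume (Metric.ball y (κ * R)) * ENNReal.ofReal (thetaR R x₀ x') := by
          apply setLIntegral_mono_ae ((thetaR_meas R x₀).const_mul _).aemeasurable
          filter_upwards [] with x' hx'
          exact step2 x' hx'
      _ = ENNReal.ofReal C * volume (Metric.ball y (κ * R)) * B := by
          rw [hB, lintegral_const_mul']
          exact ENNReal.mul_ne_top ENNReal.ofReal_ne_top (Metric.isBounded_ball.measure_lt_top).ne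
  rw [hw, ← mul_assoc] at key
  have hvpos : volume (Metric.ball y R) ≠ 0 :=
    (Metric.measure_ball_pos volume y hR).ne'
  have hvtop : volume (Metric.ball y R) ≠ ⊤ := (Metric.isBounded_ball.measure_lt_top).ne
  have key2 : A * volume (Metric.ball y R) ≤
      (ENNReal.ofReal (κ ^ 2 * C) * B) * volume (Metric.ball y R) := by
    calc A * volume (Metric.ball y R)
        ≤ ENNReal.ofReal C * ENNReal.ofReal (κ ^ 2) * volume (Metric.ball y R) * B := key
      _ = (ENNReal.ofReal (κ ^ 2 * C) * B) * volume (Metric.ball y R) := by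
          rw [← ENNReal.ofReal_mul (by positivity)]
          rw [mul_comm C (κ ^ 2)]
          ring
  exact (ENNReal.mul_le_mul_iff_left hvpos hvtop).mp key2

theorem weighted_ball_enlargement (p κ : ℝ) (hp : 1 ≤ p) (hκ : 1 ≤ κ) :
    ∃ Cκ : ℝ, 0 < Cκ ∧
      ∀ R : ℝ, 0 < R →
      ∀ x₀ : EuclideanSpace ℝ (Fin 2),
      ∀ u : EuclideanSpace ℝ (Fin 2) → ℝ, Measurable u →
        ∫⁻ x, ENNReal.ofReal (thetaR R x₀ x) *
            ∫⁻ y in Metric.ball x (κ * R), ENNReal.ofReal (|u y| ^ p) ≤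
          ENNReal.ofReal Cκ *
            ∫⁻ x, ENNReal.ofReal (thetaR R x₀ x) *
              ∫⁻ y in Metric.ball x R, ENNReal.ofReal (|u y| ^ p) := by
  refine ⟨κ ^ 2 * (1 + 4 * (κ + 1) ^ 3), by positivity, ?_⟩
  intro R hR x₀ u hu
  have hθm : Measurable fun x => ENNReal.ofReal (thetaR R x₀ x) := thetaR_meas R x₀
  have hfm : Measurable fun y => ENNReal.ofReal (|u y| ^ p) :=
    (hu.abs.pow_const p).ennreal_ofReal
  rw [lint_ball_swap (κ * R) _ _ hθm hfm, lint_ball_swap R _ _ hθm hfm,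
    ← lintegral_const_mul' _ _ ENNReal.ofReal_ne_top]
  apply lintegral_mono
  intro y
  calc ENNReal.ofReal (|u y| ^ p) * ∫⁻ x in Metric.ball y (κ * R), ENNReal.ofReal (thetaR R x₀ x)
      ≤ ENNReal.ofReal (|u y| ^ p) *
          (ENNReal.ofReal (κ ^ 2 * (1 + 4 * (κ + 1) ^ 3)) *
            ∫⁻ x in Metric.ball y R, ENNReal.ofReal (thetaR R x₀ x)) :=
        mul_le_mul_right (ball_integral_compare R κ hR hκ x₀ y) _
    _ = ENNReal.ofReal (κ ^ 2 * (1 + 4 * (κ + 1) ^ 3)) *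
          (ENNReal.ofReal (|u y| ^ p) * ∫⁻ x in Metric.ball y R, ENNReal.ofReal (thetaR R x₀ x)) := by
        ring
end

section
/- There exist constants C > 0 and C₁ > 0 such that for every R ≥ 1, every x₀ ∈ ℝ² and every measurable u : ℝ² → ℝ: ∫_{ℝ²} θ_{R,x₀}(x) ( ∫_{B_R(x)} |u(y)|² dy ) dx ≤ C R⁻¹ sup_{z ∈ ℝ²} ∫_{B_R(z)} |u(y)|² dy ≤ C₁ R sup_{z ∈ ℝ²} ∫_{B_1(z)} |u(y)|² dy (inequalities in [0,∞]), where C and C₁ are independent of R, x₀ and u. -/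
/-!
Translating by `x₀` and rescaling by `R` turns `∫ θ_{R,x₀}` into `R ^ (2 - 3) ∫ (1 + |x|³)⁻¹`, and
this last integral is finite because `3 > 2`; bounding the inner integral by its supremum over
all balls of radius `R` gives the first inequality. For the second, the unit balls centred in
`B_{R+1}(z)` cover every point of `B_R(z)` with the same multiplicity `|B_1|`, so Fubini gives
`∫_{B_R(z)} ≤ (R + 1)² sup_w ∫_{B_1(w)} ≤ 4 R² sup_w ∫_{B_1(w)}`.
-/

open MeasureTheory

open Metric Module
open scoped ENNReal

theorem lintegral_one_div_one_add_norm_pow_pos {E : Type*} [NormedAddCommGroup E]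
    [MeasurableSpace E] [OpensMeasurableSpace E] (μ : Measure E) [NeZero μ] (n : ℕ) :
    0 < ∫⁻ x, ENNReal.ofReal (1 / (1 + ‖x‖ ^ n)) ∂μ := by
  refine pos_iff_ne_zero.2 fun h0 => ?_
  obtain ⟨x, hx⟩ := ((lintegral_eq_zero_iff (by fun_prop)).1 h0).exists
  exact (ENNReal.ofReal_pos.2 (by positivity : (0 : ℝ) < 1 / (1 + ‖x‖ ^ n))).ne' hx

section HaarMeasure

variable {E : Type*} [NormedAddCommGroup E] [NormedSpace ℝ E] [FiniteDimensional ℝ E]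
  [MeasurableSpace E] [BorelSpace E] (μ : Measure E) [μ.IsAddHaarMeasure]

theorem setLIntegral_ball_mul_measure_ball_le {h : E → ℝ≥0∞} (hh : Measurable h) (z : E)
    (R r : ℝ) :
    (∫⁻ y in ball z R, h y ∂μ) * μ (ball 0 r) ≤
      μ (ball z (R + r)) * ⨆ w, ∫⁻ y in ball w r, h y ∂μ := by
  set S := ⨆ w, ∫⁻ y in ball w r, h y ∂μ
  let s : Set (E × E) := {p | dist p.1 p.2 < r} ∩ Prod.snd ⁻¹' ball z R
  have hs : MeasurableSet s :=
    (measurableSet_lt (by fun_prop) measurable_const).inter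
      (measurableSet_ball.preimage measurable_snd)
  let F : E → E → ℝ≥0∞ := fun x y => s.indicator (fun p => h p.2) (x, y)
  have hF : ∀ x y, F x y = (ball y r).indicator (fun _ => (ball z R).indicator h y) x := by
    intro x y
    by_cases hx : dist x y < r <;> by_cases hy : dist y z < R <;> simp [F, s, hx, hy]
  have hF_le : ∀ x y, F x y ≤ (ball z (R + r)).indicator 1 x * (ball x r).indicator h y := by
    intro x y
    by_cases hs_xy : (x, y) ∈ s
    · obtain ⟨hxy, hyz⟩ : dist x y < r ∧ dist y z < R := hs_xy
      have hxz : x ∈ ball z (R + r) := by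
        rw [mem_ball]; linarith [dist_triangle x y z]
      have hyx : y ∈ ball x r := by rwa [mem_ball, dist_comm]
      calc F x y ≤ h y := Set.indicator_le_self _ _ _
        _ = _ := by simp [hxz, hyx]
    · simp [F, Set.indicator_of_notMem hs_xy]
  calc (∫⁻ y in ball z R, h y ∂μ) * μ (ball 0 r)
      = ∫⁻ y, ∫⁻ x, F x y ∂μ ∂μ := by
        simp_rw [hF, lintegral_indicator_const measurableSet_ball,
          Measure.addHaar_ball_center μ _ r]
        rw [lintegral_mul_const _ (hh.indicator measurableSet_ball),
          lintegral_indicator measurableSet_ball]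
    _ = ∫⁻ x, ∫⁻ y, F x y ∂μ ∂μ :=
        (lintegral_lintegral_swap (f := F)
          ((hh.comp measurable_snd).indicator hs).aemeasurable).symm
    _ ≤ ∫⁻ x, (ball z (R + r)).indicator 1 x * S ∂μ := by
        refine lintegral_mono fun x => ?_
        calc ∫⁻ y, F x y ∂μ
            ≤ ∫⁻ y, (ball z (R + r)).indicator 1 x * (ball x r).indicator h y ∂μ :=
              lintegral_mono (hF_le x)
          _ ≤ (ball z (R + r)).indicator 1 x * S := by
              rw [lintegral_const_mul _ (hh.indicator measurableSet_ball),
                lintegral_indicator measurableSet_ball]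
              gcongr
              exact le_iSup (fun w => ∫⁻ y in ball w r, h y ∂μ) x
    _ = μ (ball z (R + r)) * S := by
        rw [lintegral_mul_const _ (measurable_one.indicator measurableSet_ball),
          lintegral_indicator_one measurableSet_ball]

theorem setLIntegral_ball_le_mul_iSup {h : E → ℝ≥0∞} (hh : Measurable h) (z : E) {R r : ℝ}
    (hR : 0 ≤ R) (hr : 0 < r) :
    ∫⁻ y in ball z R, h y ∂μ ≤
      ENNReal.ofReal (((R + r) / r) ^ finrank ℝ E) * ⨆ w, ∫⁻ y in ball w r, h y ∂μ := by
  have hcover := setLIntegral_ball_mul_measure_ball_le μ hh z R r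
  rw [← div_mul_cancel₀ (R + r) hr.ne', Measure.addHaar_ball_mul_of_pos μ z (by positivity),
    mul_right_comm] at hcover
  exact (ENNReal.mul_le_mul_iff_left (measure_ball_pos μ 0 hr).ne' measure_ball_lt_top.ne).1 hcover

theorem lintegral_comp_inv_smul {f : E → ℝ≥0∞} (hf : Measurable f) {R : ℝ} (hR : 0 < R) :
    ∫⁻ x, f (R⁻¹ • x) ∂μ = ENNReal.ofReal (R ^ finrank ℝ E) * ∫⁻ x, f x ∂μ := by
  rw [← lintegral_map hf (measurable_const_smul R⁻¹),
    Measure.map_addHaar_smul μ (inv_ne_zero hR.ne'), lintegral_smul_measure, smul_eq_mul,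
    inv_pow, inv_inv, abs_of_pos (by positivity)]

theorem lintegral_one_div_pow_add_norm_sub_pow (n : ℕ) {R : ℝ} (hR : 0 < R) (x₀ : E) :
    ∫⁻ x, ENNReal.ofReal (1 / (R ^ n + ‖x - x₀‖ ^ n)) ∂μ =
      ENNReal.ofReal (R ^ finrank ℝ E / R ^ n) * ∫⁻ x, ENNReal.ofReal (1 / (1 + ‖x‖ ^ n)) ∂μ := by
  have hscale : ∀ x : E, ENNReal.ofReal (1 / (R ^ n + ‖x‖ ^ n)) =
      ENNReal.ofReal (R ^ n)⁻¹ * ENNReal.ofReal (1 / (1 + ‖R⁻¹ • x‖ ^ n)) := by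
    intro x
    rw [← ENNReal.ofReal_mul (by positivity), norm_smul, norm_inv, Real.norm_of_nonneg hR.le]
    congr 1
    rw [mul_pow, inv_pow]
    field_simp
  rw [lintegral_sub_right_eq_self (fun x => ENNReal.ofReal (1 / (R ^ n + ‖x‖ ^ n))) x₀]
  simp_rw [hscale]
  rw [lintegral_const_mul _ (by fun_prop),
    lintegral_comp_inv_smul μ (f := fun y => ENNReal.ofReal (1 / (1 + ‖y‖ ^ n))) (by fun_prop) hR,
    ← mul_assoc, ← ENNReal.ofReal_mul (by positivity), inv_mul_eq_div]

theorem lintegral_one_div_one_add_norm_pow_lt_top {n : ℕ} (hn : finrank ℝ E < n) :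
    ∫⁻ x, ENNReal.ofReal (1 / (1 + ‖x‖ ^ n)) ∂μ < ∞ := by
  have hle : ∀ x : E, ENNReal.ofReal (1 / (1 + ‖x‖ ^ n)) ≤
      ENNReal.ofReal (2 ^ (n - 1)) * ENNReal.ofReal ((1 + ‖x‖) ^ (-(n : ℝ))) := by
    intro x
    rw [← ENNReal.ofReal_mul (by positivity), Real.rpow_neg (by positivity), Real.rpow_natCast]
    refine ENNReal.ofReal_le_ofReal ?_
    rw [← div_eq_mul_inv, div_le_div_iff₀ (by positivity) (by positivity), one_mul]
    simpa using add_pow_le zero_le_one (norm_nonneg x) n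
  calc ∫⁻ x, ENNReal.ofReal (1 / (1 + ‖x‖ ^ n)) ∂μ
      ≤ ∫⁻ x, ENNReal.ofReal (2 ^ (n - 1)) * ENNReal.ofReal ((1 + ‖x‖) ^ (-(n : ℝ))) ∂μ :=
        lintegral_mono hle
    _ < ∞ := by
        rw [lintegral_const_mul _ (by fun_prop)]
        exact ENNReal.mul_lt_top ENNReal.ofReal_lt_top
          (finite_integral_one_add_norm (by exact_mod_cast hn))

end HaarMeasure

theorem weighted_L2_ul_bound :
    ∃ C C₁ : ℝ, 0 < C ∧ 0 < C₁ ∧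
      ∀ R : ℝ, 1 ≤ R →
      ∀ x₀ : EuclideanSpace ℝ (Fin 2),
      ∀ u : EuclideanSpace ℝ (Fin 2) → ℝ, Measurable u →
        (∫⁻ x, ENNReal.ofReal (thetaR R x₀ x) *
            ∫⁻ y in Metric.ball x R, ENNReal.ofReal (|u y| ^ 2)) ≤
          ENNReal.ofReal (C / R) *
            (⨆ z : EuclideanSpace ℝ (Fin 2),
              ∫⁻ y in Metric.ball z R, ENNReal.ofReal (|u y| ^ 2)) ∧
        ENNReal.ofReal (C / R) *
            (⨆ z : EuclideanSpace ℝ (Fin 2),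
              ∫⁻ y in Metric.ball z R, ENNReal.ofReal (|u y| ^ 2)) ≤
          ENNReal.ofReal (C₁ * R) *
            ⨆ z : EuclideanSpace ℝ (Fin 2),
              ∫⁻ y in Metric.ball z 1, ENNReal.ofReal (|u y| ^ 2) := by
  set J := ∫⁻ x : EuclideanSpace ℝ (Fin 2), ENNReal.ofReal (1 / (1 + ‖x‖ ^ 3))
  have hJ_lt_top : J < ∞ := lintegral_one_div_one_add_norm_pow_lt_top volume (by simp)
  have hJ_pos : 0 < J.toReal :=
    ENNReal.toReal_pos (lintegral_one_div_one_add_norm_pow_pos volume 3).ne' hJ_lt_top.ne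
  refine ⟨J.toReal, 4 * J.toReal, hJ_pos, by positivity, fun R hR x₀ u hu => ?_⟩
  have hR0 : 0 < R := one_pos.trans_le hR
  have hθ : ∫⁻ x, ENNReal.ofReal (thetaR R x₀ x) = ENNReal.ofReal (J.toReal / R) := by
    unfold thetaR
    rw [lintegral_one_div_pow_add_norm_sub_pow volume 3 hR0 x₀, finrank_euclideanSpace_fin,
      show R ^ 2 / R ^ 3 = R⁻¹ by field_simp, ENNReal.ofReal_div_of_pos hR0,
      ENNReal.ofReal_toReal hJ_lt_top.ne, ENNReal.ofReal_inv_of_pos hR0, ENNReal.div_eq_inv_mul]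
  have hball : (⨆ z, ∫⁻ y in ball z R, ENNReal.ofReal (|u y| ^ 2)) ≤
      ENNReal.ofReal (4 * R ^ 2) * ⨆ z, ∫⁻ y in ball z 1, ENNReal.ofReal (|u y| ^ 2) := by
    refine iSup_le fun z => (setLIntegral_ball_le_mul_iSup volume (by fun_prop) z
      (by linarith) one_pos).trans ?_
    gcongr
    simp only [finrank_euclideanSpace_fin, div_one]
    nlinarith
  constructor
  · calc ∫⁻ x, ENNReal.ofReal (thetaR R x₀ x) *
            ∫⁻ y in ball x R, ENNReal.ofReal (|u y| ^ 2)
        ≤ ∫⁻ x, ENNReal.ofReal (thetaR R x₀ x) *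
            ⨆ z, ∫⁻ y in ball z R, ENNReal.ofReal (|u y| ^ 2) :=
          lintegral_mono fun x => by gcongr; exact le_iSup (fun z => ∫⁻ y in ball z R, _) x
      _ = _ := by rw [lintegral_mul_const _ (by unfold thetaR; fun_prop), hθ]
  · calc ENNReal.ofReal (J.toReal / R) * ⨆ z, ∫⁻ y in ball z R, ENNReal.ofReal (|u y| ^ 2)
        ≤ ENNReal.ofReal (J.toReal / R) * (ENNReal.ofReal (4 * R ^ 2) *
            ⨆ z, ∫⁻ y in ball z 1, ENNReal.ofReal (|u y| ^ 2)) := by gcongr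
      _ = _ := by
          rw [← mul_assoc, ← ENNReal.ofReal_mul (by positivity)]
          congr 2
          field_simp
end

section
/- There exists a constant C > 0 such that for every continuously differentiable vector field u = (u₁, u₂) : ℝ² → ℝ² with div u(x) = 0 for all x, every R > 0 and every x₀ ∈ ℝ²: ∫_{B_R(x₀)} |u|³ dx ≤ C · ( (1/R) ( ∫_{B_{2R}(x₀)} |u|² dx )^{3/2} + ( ∫_{B_{2R}(x₀)} |u|² dx )^{5/4} · ( sup_{x ∈ B_{2R}(x₀)} |rot u(x)| )^{1/2} ), where C is independent of R, x₀ and u. -/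
open MeasureTheory

/-- `rot u = ∂_{x₂} u₁ - ∂_{x₁} u₂` for a vector field `u : ℝ² → ℝ²`. -/
noncomputable def rot2 (u : EuclideanSpace ℝ (Fin 2) → EuclideanSpace ℝ (Fin 2))
    (x : EuclideanSpace ℝ (Fin 2)) : ℝ :=
  fderiv ℝ (fun y => u y 0) x (EuclideanSpace.single 1 1) -
    fderiv ℝ (fun y => u y 1) x (EuclideanSpace.single 0 1)

/-- `div u = ∂_{x₁} u₁ + ∂_{x₂} u₂` for a vector field `u : ℝ² → ℝ²`. -/
noncomputable def div2 (u : EuclideanSpace ℝ (Fin 2) → EuclideanSpace ℝ (Fin 2))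
    (x : EuclideanSpace ℝ (Fin 2)) : ℝ :=
  fderiv ℝ (fun y => u y 0) x (EuclideanSpace.single 0 1) +
    fderiv ℝ (fun y => u y 1) x (EuclideanSpace.single 1 1)


/-!
For a divergence-free field the radial derivatives of `u₁` and `u₂` differ from the angular
derivatives of `-u₂` and `u₁` by `rot u · sin θ` and `-rot u · cos θ`. Angular derivatives
integrate to zero over circles, so the circle integral of each `uᵢ` around `x` moves at rate at
most `2π Ω` in the radius, `Ω = sup |rot u|`. Averaging over `B_ρ(x)` and bounding the `L¹` mean by
AM–GM gives `|u(x)| ≲ E^{1/2}/ρ + Ω ρ` for all `ρ ≤ R`, where `E = ∫_{B_{2R}} |u|²`. Optimising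
in `ρ` gives `sup_{B_R} |u| ≲ E^{1/2}/R + E^{1/4} Ω^{1/2}`, and `∫_{B_R} |u|³ ≤ sup_{B_R} |u| · E`.
-/

open Real Set Metric

local notation "ℝ²" => EuclideanSpace ℝ (Fin 2)

lemma Continuous.integrableOn_ball {X E : Type*} [MetricSpace X] [ProperSpace X]
    [MeasurableSpace X] [OpensMeasurableSpace X] {μ : Measure X} [IsFiniteMeasureOnCompacts μ]
    [NormedAddCommGroup E] {f : X → E} (hf : Continuous f) (x : X) (r : ℝ) :
    IntegrableOn f (ball x r) μ :=
  (hf.continuousOn.integrableOn_compact (isCompact_closedBall x r)).mono_set ball_subset_closedBall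

lemma le_biSup_ball_of_continuous {X : Type*} [PseudoMetricSpace X] [ProperSpace X]
    {f : X → ℝ} (hf : Continuous f) {x y : X} {r : ℝ} (hy : y ∈ ball x r) :
    f y ≤ ⨆ z ∈ ball x r, f z := by
  refine le_ciSup₂ (f := fun z (_ : z ∈ ball x r) => f z) ?_ y hy
  obtain ⟨C, hC⟩ := (isCompact_closedBall x r).bddAbove_image hf.continuousOn
  refine ⟨C, ?_⟩
  simp only [mem_upperBounds, mem_iUnion, mem_range]
  rintro _ ⟨z, hz, rfl⟩
  exact hC ⟨z, ball_subset_closedBall hz, rfl⟩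

lemma integral_le_mul_measureReal_add_integral_sq_div {α : Type*} [MeasurableSpace α]
    {μ : Measure α} [IsFiniteMeasure μ] {f : α → ℝ} (hf : Integrable f μ)
    (hf2 : Integrable (fun a => f a ^ 2) μ) {t : ℝ} (ht : 0 < t) :
    ∫ a, f a ∂μ ≤ (t * μ.real univ + (∫ a, f a ^ 2 ∂μ) / t) / 2 := by
  have hpt : ∀ a, f a ≤ (t + f a ^ 2 / t) / 2 := fun a => by
    rw [le_div_iff₀ two_pos, ← sub_nonneg]
    have : t + f a ^ 2 / t - f a * 2 = (t - f a) ^ 2 / t := by field_simp; ring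
    rw [this]; positivity
  calc ∫ a, f a ∂μ ≤ ∫ a, (t + f a ^ 2 / t) / 2 ∂μ :=
        integral_mono hf (((integrable_const t).add (hf2.div_const t)).div_const 2) hpt
    _ = _ := by
        rw [integral_div, integral_add (integrable_const t) (hf2.div_const t), integral_const,
          integral_div, smul_eq_mul, mul_comm]

lemma setIntegral_norm_pow_three_le {X E : Type*} [MetricSpace X] [ProperSpace X]
    [MeasurableSpace X] [OpensMeasurableSpace X] {μ : Measure X} [IsFiniteMeasureOnCompacts μ]
    [NormedAddCommGroup E] {u : X → E} (hu : Continuous u) {x : X} {r r' M : ℝ} (hr : r ≤ r')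
    (hM0 : 0 ≤ M) (hM : ∀ y ∈ ball x r, ‖u y‖ ≤ M) :
    ∫ y in ball x r, ‖u y‖ ^ 3 ∂μ ≤ M * ∫ y in ball x r', ‖u y‖ ^ 2 ∂μ := by
  calc ∫ y in ball x r, ‖u y‖ ^ 3 ∂μ ≤ ∫ y in ball x r, M * ‖u y‖ ^ 2 ∂μ :=
        setIntegral_mono_on ((hu.norm.pow 3).integrableOn_ball x r)
          ((continuous_const.mul (hu.norm.pow 2)).integrableOn_ball x r) measurableSet_ball
          fun y hy => by
            rw [pow_succ']; exact mul_le_mul_of_nonneg_right (hM y hy) (by positivity)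
    _ = M * ∫ y in ball x r, ‖u y‖ ^ 2 ∂μ := integral_const_mul M _
    _ ≤ M * ∫ y in ball x r', ‖u y‖ ^ 2 ∂μ := mul_le_mul_of_nonneg_left
        (setIntegral_mono_set ((hu.norm.pow 2).integrableOn_ball x r')
          (.of_forall fun _ => sq_nonneg _) (ball_subset_ball hr).eventuallyLE) hM0

lemma le_two_mul_of_forall_le_div_add_mul {X a Ω R : ℝ} (ha : 0 < a) (hΩ : 0 ≤ Ω)
    (hR : 0 < R) (h : ∀ ρ ∈ Ioc 0 R, X ≤ a / ρ + Ω * ρ) : X ≤ 2 * (a / R + √(a * Ω)) := by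
  have hsqrt : 0 ≤ √(a * Ω) := sqrt_nonneg _
  by_cases hcase : Ω * R ^ 2 ≤ a
  · have hΩR : Ω * R ≤ a / R := by rw [le_div_iff₀ hR]; linarith
    linarith [h R ⟨hR, le_rfl⟩, div_pos ha hR]
  -- Otherwise the two terms balance at `ρ = √(a / Ω) < R`, where both equal `√(a * Ω)`.
  have hΩ0 : 0 < Ω := lt_of_le_of_ne hΩ (by rintro rfl; simp at hcase; linarith)
  have hρ : 0 < √(a / Ω) := sqrt_pos.mpr (div_pos ha hΩ0)
  have hρR : √(a / Ω) ≤ R := by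
    rw [sqrt_le_left hR.le, div_le_iff₀ hΩ0]; linarith
  have hρsq : √(a / Ω) * √(a / Ω) = a / Ω := mul_self_sqrt (div_pos ha hΩ0).le
  have hbalance : Ω * √(a / Ω) = √(a * Ω) := by
    rw [eq_comm, sqrt_eq_iff_mul_self_eq_of_pos (by positivity), mul_mul_mul_comm, hρsq]
    field_simp
  have hbalance' : a / √(a / Ω) = √(a * Ω) := by
    rw [div_eq_iff hρ.ne', ← hbalance, mul_assoc, hρsq]
    field_simp
  linarith [h _ ⟨hρ, hρR⟩, div_pos ha hR]

lemma sqrt_div_add_sqrt_sqrt_mul_mul_eq {E Ω R : ℝ} (hE : 0 ≤ E) :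
    (√E / R + √(√E * Ω)) * E =
      1 / R * E ^ ((3 : ℝ) / 2) + E ^ ((5 : ℝ) / 4) * Ω ^ ((1 : ℝ) / 2) := by
  have h32 : E ^ ((3 : ℝ) / 2) = √E * E := by
    rw [sqrt_eq_rpow, ← rpow_add_one' hE (by norm_num)]; norm_num
  have h54 : E ^ ((5 : ℝ) / 4) = √(√E) * E := by
    rw [sqrt_eq_rpow, sqrt_eq_rpow, ← rpow_mul hE, ← rpow_add_one' hE (by norm_num)]; norm_num
  rw [h32, h54, sqrt_mul (sqrt_nonneg E), ← sqrt_eq_rpow]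
  ring

lemma norm_le_abs_add_abs (v : ℝ²) : ‖v‖ ≤ |v 0| + |v 1| := by
  rw [EuclideanSpace.norm_eq, Fin.sum_univ_two, Real.sqrt_le_iff]
  refine ⟨by positivity, ?_⟩
  simp only [Real.norm_eq_abs, sq_abs]
  nlinarith [abs_mul_abs_self (v 0), abs_mul_abs_self (v 1), abs_nonneg (v 0), abs_nonneg (v 1)]

noncomputable def unitVec (θ : ℝ) : ℝ² :=
  cos θ • EuclideanSpace.single 0 1 + sin θ • EuclideanSpace.single 1 1

noncomputable def unitVecPerp (θ : ℝ) : ℝ² :=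
  (-sin θ) • EuclideanSpace.single 0 1 + cos θ • EuclideanSpace.single 1 1

@[simp] lemma norm_unitVec (θ : ℝ) : ‖unitVec θ‖ = 1 := by
  simp [unitVec, EuclideanSpace.norm_eq, Fin.sum_univ_two]

@[fun_prop] lemma continuous_unitVec : Continuous unitVec := by
  unfold unitVec; fun_prop

@[fun_prop] lemma continuous_unitVecPerp : Continuous unitVecPerp := by
  unfold unitVecPerp; fun_prop

lemma hasDerivAt_unitVec (θ : ℝ) : HasDerivAt unitVec (unitVecPerp θ) θ :=
  ((hasDerivAt_cos θ).smul_const _).add ((hasDerivAt_sin θ).smul_const _)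

lemma unitVec_neg_pi : unitVec (-π) = unitVec π := by
  simp [unitVec]

lemma integral_unitVecPerp : ∫ θ in -π..π, unitVecPerp θ = 0 := by
  rw [intervalIntegral.integral_eq_sub_of_hasDerivAt (fun θ _ => hasDerivAt_unitVec θ)
    (continuous_unitVecPerp.intervalIntegrable _ _), unitVec_neg_pi, sub_self]

/-- `p ↦ x + (p.1, p.2)`. -/
noncomputable def translateCoord (x : ℝ²) : (ℝ × ℝ) ≃ᵐ ℝ² :=
  (MeasurableEquiv.finTwoArrow.symm.trans (MeasurableEquiv.toLp 2 (Fin 2 → ℝ))).trans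
    (MeasurableEquiv.addLeft x)

lemma measurePreserving_translateCoord (x : ℝ²) :
    MeasurePreserving (translateCoord x) volume volume :=
  (measurePreserving_add_left volume x).comp
    ((EuclideanSpace.volume_preserving_symm_measurableEquiv_toLp (Fin 2)).symm.comp
      (volume_preserving_finTwoArrow ℝ).symm)

lemma translateCoord_polarCoord_symm (x : ℝ²) (q : ℝ × ℝ) :
    translateCoord x (polarCoord.symm q) = x + q.1 • unitVec q.2 := by
  ext i
  fin_cases i <;> simp [translateCoord, polarCoord_symm_apply, unitVec, mul_comm]

lemma integral_eq_integral_polarCoord {E : Type*} [NormedAddCommGroup E] [NormedSpace ℝ E]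
    (h : ℝ² → E) (x : ℝ²) :
    ∫ y, h y = ∫ q in polarCoord.target, q.1 • h (x + q.1 • unitVec q.2) := by
  rw [← (measurePreserving_translateCoord x).integral_comp' h,
    ← integral_comp_polarCoord_symm (fun p => h (translateCoord x p))]
  simp only [translateCoord_polarCoord_symm]

noncomputable def angularIntegral (f : ℝ² → ℝ) (x : ℝ²) (r : ℝ) : ℝ :=
  ∫ θ in -π..π, f (x + r • unitVec θ)

lemma integral_ball_eq_integral_angularIntegral {h : ℝ² → ℝ} (hh : Continuous h) (x : ℝ²)
    {ρ : ℝ} (hρ : 0 ≤ ρ) :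
    ∫ y in ball x ρ, h y = ∫ r in 0..ρ, r * angularIntegral h x r := by
  have hpolar : ∀ q ∈ polarCoord.target,
      q.1 • (ball x ρ).indicator h (x + q.1 • unitVec q.2) =
        (Iio ρ ×ˢ univ).indicator (fun q => q.1 * h (x + q.1 • unitVec q.2)) q := by
    rintro q hq
    have hmem : x + q.1 • unitVec q.2 ∈ ball x ρ ↔ q ∈ Iio ρ ×ˢ univ := by
      simp [norm_smul, abs_of_pos (show 0 < q.1 from hq.1)]
    by_cases hq' : q ∈ Iio ρ ×ˢ univ
    · simp [indicator_of_mem (hmem.2 hq'), indicator_of_mem hq']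
    · simp [indicator_of_notMem (mt hmem.1 hq'), indicator_of_notMem hq']
  have htarget : polarCoord.target ∩ Iio ρ ×ˢ univ = Ioo 0 ρ ×ˢ Ioo (-π) π := by
    ext q
    simp only [polarCoord_target, mem_inter_iff, mem_prod, mem_Ioi, mem_Iio, mem_univ, mem_Ioo]
    tauto
  have hint : IntegrableOn (fun q : ℝ × ℝ => q.1 * h (x + q.1 • unitVec q.2))
      (Ioo 0 ρ ×ˢ Ioo (-π) π) (volume.prod volume) := by
    rw [← Measure.volume_eq_prod]
    exact ((Continuous.continuousOn (by fun_prop)).integrableOn_compact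
      (isCompact_Icc.prod isCompact_Icc)).mono_set
        (prod_mono Ioo_subset_Icc_self Ioo_subset_Icc_self)
  rw [← integral_indicator measurableSet_ball, integral_eq_integral_polarCoord _ x,
    setIntegral_congr_fun polarCoord.open_target.measurableSet hpolar,
    setIntegral_indicator (measurableSet_Iio.prod MeasurableSet.univ), htarget,
    Measure.volume_eq_prod, setIntegral_prod _ hint, intervalIntegral.integral_of_le hρ,
    integral_Ioc_eq_integral_Ioo]
  refine setIntegral_congr_fun measurableSet_Ioo fun r _ => ?_
  rw [angularIntegral, ← intervalIntegral.integral_const_mul,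
    intervalIntegral.integral_of_le (by linarith [pi_pos]), integral_Ioc_eq_integral_Ioo]

lemma angularIntegral_zero (f : ℝ² → ℝ) (x : ℝ²) :
    angularIntegral f x 0 = 2 * π * f x := by
  simp only [angularIntegral, zero_smul, add_zero, intervalIntegral.integral_const, smul_eq_mul]
  ring

lemma hasDerivAt_angularIntegral {f : ℝ² → ℝ} (hf : ContDiff ℝ 1 f) (x : ℝ²) (r : ℝ) :
    HasDerivAt (angularIntegral f x)
      (∫ θ in -π..π, fderiv ℝ f (x + r • unitVec θ) (unitVec θ)) r := by
  have hdf : Continuous (fderiv ℝ f) := hf.continuous_fderiv one_ne_zero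
  obtain ⟨B, hB⟩ := (isCompact_closedBall x (|r| + 1)).exists_bound_of_continuousOn
    hdf.continuousOn
  refine (intervalIntegral.hasDerivAt_integral_of_dominated_loc_of_deriv_le (bound := fun _ => B)
    (F := fun s θ => f (x + s • unitVec θ))
    (F' := fun s θ => fderiv ℝ f (x + s • unitVec θ) (unitVec θ)) (ball_mem_nhds r one_pos)
    (.of_forall fun s => (hf.continuous.comp (by fun_prop)).aestronglyMeasurable)
    ((hf.continuous.comp (by fun_prop)).intervalIntegrable _ _)
    ((hdf.comp (by fun_prop)).clm_apply continuous_unitVec).aestronglyMeasurable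
    (.of_forall fun θ _ s hs => ?_) intervalIntegrable_const
    (.of_forall fun θ _ s _ => ?_)).2
  · have hmem : x + s • unitVec θ ∈ closedBall x (|r| + 1) := by
      have := abs_sub_abs_le_abs_sub s r
      rw [mem_ball, Real.dist_eq] at hs
      simp [norm_smul]
      linarith
    simpa using (fderiv ℝ f _).le_of_opNorm_le (hB _ hmem) (unitVec θ)
  · have hline : HasDerivAt (fun s : ℝ => x + s • unitVec θ) (unitVec θ) s := by
      simpa using ((hasDerivAt_id s).smul_const (unitVec θ)).const_add x
    exact (hf.differentiable one_ne_zero _).hasFDerivAt.comp_hasDerivAt s hline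

lemma integral_fderiv_unitVecPerp_eq_zero {g : ℝ² → ℝ} (hg : ContDiff ℝ 1 g) (x : ℝ²)
    (r : ℝ) : ∫ θ in -π..π, fderiv ℝ g (x + r • unitVec θ) (unitVecPerp θ) = 0 := by
  rcases eq_or_ne r 0 with rfl | hr
  · simp only [zero_smul, add_zero]
    rw [(fderiv ℝ g x).intervalIntegral_comp_comm
      (continuous_unitVecPerp.intervalIntegrable _ _), integral_unitVecPerp, map_zero]
  -- `∂_θ g(x + r e(θ)) = r · Dg(x + r e(θ)) e⊥(θ)` integrates to zero by periodicity.
  have hcurve : ∀ θ, HasDerivAt (fun t => g (x + r • unitVec t))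
      (fderiv ℝ g (x + r • unitVec θ) (r • unitVecPerp θ)) θ := fun θ =>
    (hg.differentiable one_ne_zero _).hasFDerivAt.comp_hasDerivAt θ
      (((hasDerivAt_unitVec θ).const_smul r).const_add x)
  have hcont : Continuous fun θ => fderiv ℝ g (x + r • unitVec θ) (r • unitVecPerp θ) :=
    ((hg.continuous_fderiv one_ne_zero).comp (by fun_prop)).clm_apply (by fun_prop)
  have hperiod := intervalIntegral.integral_eq_sub_of_hasDerivAt (fun θ _ => hcurve θ)
    (hcont.intervalIntegrable (-π) π)
  simp only [map_smul, smul_eq_mul, intervalIntegral.integral_const_mul, unitVec_neg_pi,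
    sub_self] at hperiod
  exact (mul_eq_zero.mp hperiod).resolve_left hr

lemma abs_angularIntegral_sub_le {f g : ℝ² → ℝ} (hf : ContDiff ℝ 1 f)
    (hg : ContDiff ℝ 1 g) {x : ℝ²} {r M : ℝ} (hr : 0 ≤ r)
    (hM : ∀ y ∈ closedBall x r, ∀ θ,
      |fderiv ℝ f y (unitVec θ) - fderiv ℝ g y (unitVecPerp θ)| ≤ M) :
    |angularIntegral f x r - 2 * π * f x| ≤ 2 * π * M * r := by
  have hderiv : ∀ s ∈ Icc 0 r,
      ‖∫ θ in -π..π, fderiv ℝ f (x + s • unitVec θ) (unitVec θ)‖ ≤ 2 * π * M := by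
    intro s hs
    have hmem : ∀ θ, x + s • unitVec θ ∈ closedBall x r := fun θ => by
      simp [norm_smul, abs_of_nonneg hs.1, hs.2]
    have hint : ∀ {h : ℝ² → ℝ}, ContDiff ℝ 1 h → ∀ v : ℝ → ℝ², Continuous v →
        IntervalIntegrable (fun θ => fderiv ℝ h (x + s • unitVec θ) (v θ)) volume (-π) π :=
      fun hh v hv => (((hh.continuous_fderiv one_ne_zero).comp (by fun_prop)).clm_apply
        hv).intervalIntegrable _ _
    rw [← sub_zero (∫ θ in -π..π, _), ← integral_fderiv_unitVecPerp_eq_zero hg x s,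
      ← intervalIntegral.integral_sub (hint hf _ continuous_unitVec)
        (hint hg _ continuous_unitVecPerp)]
    calc _ ≤ M * |π - -π| := intervalIntegral.norm_integral_le_of_norm_le_const
          fun θ _ => hM _ (hmem θ) θ
      _ = 2 * π * M := by rw [abs_of_pos (by linarith [pi_pos])]; ring
  have := (convex_Icc 0 r).norm_image_sub_le_of_norm_hasDerivWithin_le
    (fun s _ => (hasDerivAt_angularIntegral hf x s).hasDerivWithinAt) hderiv
    (left_mem_Icc.mpr hr) (right_mem_Icc.mpr hr)
  rwa [angularIntegral_zero, Real.norm_eq_abs, Real.norm_eq_abs, sub_zero,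
    abs_of_nonneg hr] at this

lemma abs_integral_ball_sub_le {f g : ℝ² → ℝ} (hf : ContDiff ℝ 1 f) (hg : ContDiff ℝ 1 g)
    {x : ℝ²} {ρ M : ℝ} (hρ : 0 ≤ ρ)
    (hM : ∀ y ∈ closedBall x ρ, ∀ θ,
      |fderiv ℝ f y (unitVec θ) - fderiv ℝ g y (unitVecPerp θ)| ≤ M) :
    |(∫ y in ball x ρ, f y) - π * ρ ^ 2 * f x| ≤ 2 * π / 3 * M * ρ ^ 3 := by
  have hcont : Continuous (angularIntegral f x) := continuous_iff_continuousAt.mpr fun r =>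
    (hasDerivAt_angularIntegral hf x r).continuousAt
  have hcenter : π * ρ ^ 2 * f x = ∫ r in 0..ρ, r * (2 * π * f x) := by
    rw [intervalIntegral.integral_mul_const, integral_id]; ring
  rw [integral_ball_eq_integral_angularIntegral hf.continuous x hρ, hcenter,
    ← intervalIntegral.integral_sub ((by fun_prop : Continuous _).intervalIntegrable _ _)
      ((by fun_prop : Continuous _).intervalIntegrable _ _)]
  calc _ ≤ ∫ r in 0..ρ, |r * angularIntegral f x r - r * (2 * π * f x)| :=
        intervalIntegral.abs_integral_le_integral_abs hρ
    _ ≤ ∫ r in 0..ρ, 2 * π * M * r ^ 2 := by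
        refine intervalIntegral.integral_mono_on hρ
          ((by fun_prop : Continuous _).intervalIntegrable _ _)
          ((by fun_prop : Continuous _).intervalIntegrable _ _) fun r hr => ?_
        rw [← mul_sub, abs_mul, abs_of_nonneg hr.1]
        have := abs_angularIntegral_sub_le hf hg hr.1 fun y hy =>
          hM y (closedBall_subset_closedBall hr.2 hy)
        nlinarith [hr.1]
    _ = 2 * π / 3 * M * ρ ^ 3 := by
        rw [intervalIntegral.integral_const_mul, integral_pow]; ring

lemma continuous_rot2 {u : ℝ² → ℝ²} (hu : ContDiff ℝ 1 u) : Continuous (rot2 u) := by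
  have hcoord : ∀ i, Continuous (fderiv ℝ fun y => u y i) := fun i =>
    (contDiff_euclidean.mp hu i).continuous_fderiv one_ne_zero
  exact ((hcoord 0).clm_apply continuous_const).sub ((hcoord 1).clm_apply continuous_const)

lemma fderiv_fst_unitVec_sub_eq_rot2_mul_sin (u : ℝ² → ℝ²) {y : ℝ²} (hdiv : div2 u y = 0)
    (θ : ℝ) :
    fderiv ℝ (fun y => u y 0) y (unitVec θ) - fderiv ℝ (fun y => -u y 1) y (unitVecPerp θ) =
      rot2 u y * sin θ := by
  rw [div2] at hdiv
  simp only [rot2, fderiv_fun_neg, unitVec, unitVecPerp, map_add, map_smul, smul_eq_mul,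
    neg_apply]
  linear_combination cos θ * hdiv

lemma fderiv_snd_unitVec_sub_eq_neg_rot2_mul_cos (u : ℝ² → ℝ²) {y : ℝ²}
    (hdiv : div2 u y = 0) (θ : ℝ) :
    fderiv ℝ (fun y => u y 1) y (unitVec θ) - fderiv ℝ (fun y => u y 0) y (unitVecPerp θ) =
      -(rot2 u y * cos θ) := by
  rw [div2] at hdiv
  simp only [rot2, unitVec, unitVecPerp, map_add, map_smul, smul_eq_mul]
  linear_combination sin θ * hdiv

lemma mul_norm_le_integral_ball_of_divergence_free {u : ℝ² → ℝ²} (hu : ContDiff ℝ 1 u)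
    (hdiv : ∀ y, div2 u y = 0) {x : ℝ²} {ρ Ω : ℝ} (hρ : 0 ≤ ρ)
    (hΩ : ∀ y ∈ closedBall x ρ, |rot2 u y| ≤ Ω) :
    π * ρ ^ 2 * ‖u x‖ ≤ 2 * (∫ y in ball x ρ, ‖u y‖) + 4 * π / 3 * Ω * ρ ^ 3 := by
  have hcoord : ∀ {f g : ℝ² → ℝ}, ContDiff ℝ 1 f → ContDiff ℝ 1 g →
      (∀ y, |f y| ≤ ‖u y‖) → (∀ y ∈ closedBall x ρ, ∀ θ,
        |fderiv ℝ f y (unitVec θ) - fderiv ℝ g y (unitVecPerp θ)| ≤ Ω) →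
      π * ρ ^ 2 * |f x| ≤ (∫ y in ball x ρ, ‖u y‖) + 2 * π / 3 * Ω * ρ ^ 3 := by
    intro f g hf hg hfu hM
    have hmean := abs_integral_ball_sub_le hf hg hρ hM
    have hf_le : |∫ y in ball x ρ, f y| ≤ ∫ y in ball x ρ, ‖u y‖ :=
      abs_integral_le_integral_abs.trans (setIntegral_mono_on
        (hf.continuous.abs.integrableOn_ball x ρ) (hu.continuous.norm.integrableOn_ball x ρ)
        measurableSet_ball fun y _ => hfu y)
    rw [← abs_of_nonneg (by positivity : 0 ≤ π * ρ ^ 2), ← abs_mul]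
    linarith [abs_sub_abs_le_abs_sub (π * ρ ^ 2 * f x) (∫ y in ball x ρ, f y),
      abs_sub_comm (π * ρ ^ 2 * f x) (∫ y in ball x ρ, f y)]
  have hu_coord : ∀ i, ContDiff ℝ 1 fun y => u y i := fun i => contDiff_euclidean.mp hu i
  have h0 := hcoord (hu_coord 0) (hu_coord 1).neg
    (fun y => by simpa using PiLp.norm_apply_le (u y) 0) fun y hy θ => by
      rw [fderiv_fst_unitVec_sub_eq_rot2_mul_sin u (hdiv y), abs_mul]
      exact (mul_le_of_le_one_right (abs_nonneg _) (abs_sin_le_one θ)).trans (hΩ y hy)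
  have h1 := hcoord (hu_coord 1) (hu_coord 0)
    (fun y => by simpa using PiLp.norm_apply_le (u y) 1) fun y hy θ => by
      rw [fderiv_snd_unitVec_sub_eq_neg_rot2_mul_cos u (hdiv y), abs_neg, abs_mul]
      exact (mul_le_of_le_one_right (abs_nonneg _) (abs_cos_le_one θ)).trans (hΩ y hy)
  have := mul_le_mul_of_nonneg_left (norm_le_abs_add_abs (u x)) (by positivity : 0 ≤ π * ρ ^ 2)
  linarith

lemma norm_le_div_add_mul_of_integral_sq_le {u : ℝ² → ℝ²} (hu : ContDiff ℝ 1 u)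
    (hdiv : ∀ y, div2 u y = 0) {x : ℝ²} {ρ Ω a : ℝ} (hρ : 0 < ρ)
    (hΩ : ∀ y ∈ closedBall x ρ, |rot2 u y| ≤ Ω) (ha : 0 < a)
    (hE : ∫ y in ball x ρ, ‖u y‖ ^ 2 ≤ a ^ 2) :
    ‖u x‖ ≤ 2 * (a / ρ + Ω * ρ) := by
  have hΩ0 : 0 ≤ Ω := (abs_nonneg _).trans (hΩ x (mem_closedBall_self hρ.le))
  have hvol : volume.real (ball x ρ) = π * ρ ^ 2 := by
    simp [measureReal_def, ENNReal.toReal_ofReal hρ.le, pi_pos.le, mul_comm]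
  have : IsFiniteMeasure (volume.restrict (ball x ρ)) :=
    isFiniteMeasure_restrict.mpr measure_ball_lt_top.ne
  have hamgm := integral_le_mul_measureReal_add_integral_sq_div (μ := volume.restrict (ball x ρ))
    (hu.continuous.norm.integrableOn_ball x ρ) ((hu.continuous.norm.pow 2).integrableOn_ball x ρ)
    (div_pos ha hρ)
  rw [measureReal_restrict_apply_univ, hvol] at hamgm
  have hmean := mul_norm_le_integral_ball_of_divergence_free hu hdiv hρ.le hΩ
  have hbound : π * ρ ^ 2 * ‖u x‖ ≤ π * ρ ^ 2 * (2 * (a / ρ + Ω * ρ)) := by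
    have h1 : a / ρ * (π * ρ ^ 2) = π * ρ * a := by field_simp
    have h2 : (∫ y in ball x ρ, ‖u y‖ ^ 2) / (a / ρ) ≤ ρ * a := by
      rw [div_le_iff₀ (div_pos ha hρ)]; field_simp; nlinarith
    have h3 : π * ρ ^ 2 * (2 * (a / ρ + Ω * ρ)) = 2 * π * ρ * a + 2 * π * Ω * ρ ^ 3 := by
      field_simp
    nlinarith [pi_gt_three, mul_pos hρ ha, mul_nonneg hΩ0 (pow_pos hρ 3).le]
  exact le_of_mul_le_mul_left hbound (by positivity)

lemma norm_le_div_add_sqrt_mul_of_integral_sq_le {u : ℝ² → ℝ²} (hu : ContDiff ℝ 1 u)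
    (hdiv : ∀ y, div2 u y = 0) {x₀ x : ℝ²} {R Ω a : ℝ} (hR : 0 < R) (hx : x ∈ ball x₀ R)
    (hΩ : ∀ y ∈ ball x₀ (2 * R), |rot2 u y| ≤ Ω) (ha : 0 < a)
    (hE : ∫ y in ball x₀ (2 * R), ‖u y‖ ^ 2 ≤ a ^ 2) :
    ‖u x‖ ≤ 4 * (a / R + √(a * Ω)) := by
  have hΩ0 : 0 ≤ Ω := (abs_nonneg _).trans (hΩ x₀ (mem_ball_self (by positivity)))
  suffices ‖u x‖ / 2 ≤ 2 * (a / R + √(a * Ω)) by linarith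
  refine le_two_mul_of_forall_le_div_add_mul ha hΩ0 hR fun ρ hρ => ?_
  have hsub : closedBall x ρ ⊆ ball x₀ (2 * R) :=
    closedBall_subset_ball' (by rw [mem_ball] at hx; linarith [hρ.2])
  have hEρ : ∫ y in ball x ρ, ‖u y‖ ^ 2 ≤ a ^ 2 :=
    (setIntegral_mono_set ((hu.continuous.norm.pow 2).integrableOn_ball x₀ (2 * R))
      (.of_forall fun _ => sq_nonneg _) (ball_subset_closedBall.trans hsub).eventuallyLE).trans hE
  linarith [norm_le_div_add_mul_of_integral_sq_le hu hdiv hρ.1 (fun y hy => hΩ y (hsub hy)) ha hEρ]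

theorem cubic_interpolation_inequality :
    ∃ C : ℝ, 0 < C ∧
      ∀ u : EuclideanSpace ℝ (Fin 2) → EuclideanSpace ℝ (Fin 2),
        ContDiff ℝ 1 u → (∀ x, div2 u x = 0) →
      ∀ R : ℝ, 0 < R → ∀ x₀ : EuclideanSpace ℝ (Fin 2),
        ∫ x in Metric.ball x₀ R, ‖u x‖ ^ 3 ≤
          C * ((1 / R) * (∫ x in Metric.ball x₀ (2 * R), ‖u x‖ ^ 2) ^ ((3 : ℝ) / 2) +
            (∫ x in Metric.ball x₀ (2 * R), ‖u x‖ ^ 2) ^ ((5 : ℝ) / 4) *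
              (⨆ x ∈ Metric.ball x₀ (2 * R), |rot2 u x|) ^ ((1 : ℝ) / 2)) := by
  refine ⟨4, by norm_num, fun u hu hdiv R hR x₀ => ?_⟩
  set E := ∫ x in ball x₀ (2 * R), ‖u x‖ ^ 2
  set Ω := ⨆ x ∈ ball x₀ (2 * R), |rot2 u x|
  have hΩ : ∀ y ∈ ball x₀ (2 * R), |rot2 u y| ≤ Ω := fun y hy =>
    le_biSup_ball_of_continuous (continuous_rot2 hu).abs hy
  have hE0 : 0 ≤ E := setIntegral_nonneg measurableSet_ball fun _ _ => by positivity
  have hcube : ∀ a, 0 < a → E ≤ a ^ 2 →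
      ∫ x in ball x₀ R, ‖u x‖ ^ 3 ≤ 4 * (a / R + √(a * Ω)) * E := fun a ha haE =>
    setIntegral_norm_pow_three_le hu.continuous (by linarith) (by positivity)
      fun x hx => norm_le_div_add_sqrt_mul_of_integral_sq_le hu hdiv hR hx hΩ ha haE
  rcases hE0.eq_or_lt with hE | hE
  · simpa [← hE] using hcube 1 one_pos (by rw [← hE]; norm_num)
  · rw [← sqrt_div_add_sqrt_sqrt_mul_mul_eq hE0, ← mul_assoc]
    exact hcube √E (sqrt_pos.mpr hE) (sq_sqrt hE0).ge
end

section
/- Let K > 0, L > 0, T > 0 and let y : [0, T] → ℝ be continuously differentiable with 0 < y(t) ≤ K for all t ∈ [0, T] and y′(t) ≤ L · y(t) · ln( K / y(t) ) for all t ∈ [0, T]. Then for all t ∈ [0, T]: y(t) ≤ K · ( y(0) / K )^{exp(−L t)}. -/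
/-! With `z = ln (K / y)` the hypothesis reads `z' ≥ -L z`, so `exp (L t) * z t` is nondecreasing
and `z t ≥ exp (-L t) * z 0`; exponentiating back gives the bound. -/

open Real Set

theorem hasDerivAt_log_const_div {f : ℝ → ℝ} {f' x c : ℝ} (hc : c ≠ 0) (hf : HasDerivAt f f' x)
    (hx : f x ≠ 0) : HasDerivAt (fun s => log (c / f s)) (-(f' / f x)) x :=
  (((hasDerivAt_const x c).div hf hx).log (div_ne_zero hc hx)).congr_deriv <| by
    simp only [Pi.div_apply]; field_simp; ring

section LinearLowerBound

variable {z z' : ℝ → ℝ} {L a b : ℝ}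

theorem monotoneOn_exp_mul_of_neg_mul_le_deriv (hz : ∀ s ∈ Icc a b, HasDerivAt z (z' s) s)
    (hle : ∀ s ∈ Icc a b, -L * z s ≤ z' s) :
    MonotoneOn (fun s => exp (L * s) * z s) (Icc a b) := by
  have hderiv : ∀ s ∈ Icc a b, HasDerivAt (fun s => exp (L * s) * z s)
      (exp (L * s) * (L * z s + z' s)) s := fun s hs =>
    ((((hasDerivAt_id s).const_mul L).exp).mul (hz s hs)).congr_deriv <| by
      simp only [id, mul_one]; ring
  have hint : ∀ s ∈ interior (Icc a b), s ∈ Icc a b := fun s hs => interior_subset hs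
  refine monotoneOn_of_deriv_nonneg (convex_Icc a b)
    (fun s hs => (hderiv s hs).continuousAt.continuousWithinAt)
    (fun s hs => (hderiv s (hint s hs)).differentiableAt.differentiableWithinAt)
    fun s hs => ?_
  rw [(hderiv s (hint s hs)).deriv]
  exact mul_nonneg (exp_pos _).le (by linarith [hle s (hint s hs)])

theorem exp_neg_mul_mul_le_of_neg_mul_le_deriv (hz : ∀ s ∈ Icc a b, HasDerivAt z (z' s) s)
    (hle : ∀ s ∈ Icc a b, -L * z s ≤ z' s) {t : ℝ} (ht : t ∈ Icc a b) :
    exp (-L * (t - a)) * z a ≤ z t := by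
  have hmono := monotoneOn_exp_mul_of_neg_mul_le_deriv hz hle
    (left_mem_Icc.2 (ht.1.trans ht.2)) ht ht.1
  calc exp (-L * (t - a)) * z a = exp (-(L * t)) * (exp (L * a) * z a) := by
        rw [← mul_assoc, ← exp_add]; ring_nf
    _ ≤ exp (-(L * t)) * (exp (L * t) * z t) := by gcongr
    _ = z t := by rw [← mul_assoc, ← exp_add, neg_add_cancel, exp_zero, one_mul]

end LinearLowerBound

theorem le_mul_rpow_of_mul_log_div_le {K a b c : ℝ} (hK : 0 < K) (ha : 0 < a) (hb : 0 < b)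
    (h : c * log (K / a) ≤ log (K / b)) : b ≤ K * (a / K) ^ c := by
  have hlog : log (b / K) ≤ log (a / K) * c := by
    rw [← inv_div K b, ← inv_div K a, log_inv, log_inv]
    linarith
  rw [← div_le_iff₀' hK, rpow_def_of_pos (div_pos ha hK), ← exp_log (div_pos hb hK)]
  exact exp_le_exp.2 hlog

theorem log_gronwall_inequality_general (K L T : ℝ) (hK : 0 < K)
    (y y' : ℝ → ℝ)
    (hderiv : ∀ t ∈ Set.Icc (0 : ℝ) T, HasDerivAt y (y' t) t)
    (hpos : ∀ t ∈ Set.Icc (0 : ℝ) T, 0 < y t)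
    (hineq : ∀ t ∈ Set.Icc (0 : ℝ) T, y' t ≤ L * y t * Real.log (K / y t)) :
    ∀ t ∈ Set.Icc (0 : ℝ) T, y t ≤ K * (y 0 / K) ^ Real.exp (-L * t) := by
  intro t ht
  have hz : ∀ s ∈ Icc 0 T, HasDerivAt (fun s => log (K / y s)) (-(y' s / y s)) s :=
    fun s hs => hasDerivAt_log_const_div hK.ne' (hderiv s hs) (hpos s hs).ne'
  have hle : ∀ s ∈ Icc 0 T, -L * log (K / y s) ≤ -(y' s / y s) := by
    intro s hs
    rw [neg_mul, neg_le_neg_iff, div_le_iff₀ (hpos s hs)]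
    linarith [hineq s hs]
  have hbound := exp_neg_mul_mul_le_of_neg_mul_le_deriv hz hle ht
  rw [sub_zero] at hbound
  exact le_mul_rpow_of_mul_log_div_le hK (hpos 0 (left_mem_Icc.2 (ht.1.trans ht.2))) (hpos t ht)
    hbound

theorem log_gronwall_inequality (K L T : ℝ) (hK : 0 < K) (hL : 0 < L) (hT : 0 < T)
    (y y' : ℝ → ℝ)
    (hderiv : ∀ t ∈ Set.Icc (0 : ℝ) T, HasDerivAt y (y' t) t)
    (hcont : ContinuousOn y' (Set.Icc (0 : ℝ) T))
    (hpos : ∀ t ∈ Set.Icc (0 : ℝ) T, 0 < y t)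
    (hbd : ∀ t ∈ Set.Icc (0 : ℝ) T, y t ≤ K)
    (hineq : ∀ t ∈ Set.Icc (0 : ℝ) T, y' t ≤ L * y t * Real.log (K / y t)) :
    ∀ t ∈ Set.Icc (0 : ℝ) T, y t ≤ K * (y 0 / K) ^ Real.exp (-L * t) :=
  log_gronwall_inequality_general K L T hK y y' hderiv hpos hineq
end

section
/- Let α > 0, T > 0. Let u : [0, T] × ℝ² → ℝ² be continuous and bounded, let f : [0, T] × ℝ² → ℝ be continuous and bounded, and let ω : [0, T] × ℝ² → ℝ be continuously differentiable and bounded, satisfying pointwise the damped transport equation ∂_t ω(t,x) + α ω(t,x) + u(t,x) · ∇_x ω(t,x) = f(t,x) for all (t,x) ∈ [0,T] × ℝ². Then for all t ∈ [0, T]: sup_{x ∈ ℝ²} |ω(t,x)| ≤ e^{−α t} sup_{x ∈ ℝ²} |ω(0,x)| + (1/α) sup_{(s,x) ∈ [0,T] × ℝ²} |f(s,x)|. -/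
/-!
The substitution `v = exp (α t) * (ω - F / α)` turns a subsolution of the damped equation
(right-hand side at most `F`) into a subsolution of the transport inequality
`∂ₜ v + u · ∇ v ≤ 0`, so it suffices to show that such a `v` never exceeds `sup v(0, ·)`.
For this maximise `v(t, x) - δ t - ε √(1 + ‖x‖²)` over `[0, t₀] × E`: the penalty makes
the maximum exist, and at a maximum with `t > 0` the time derivative of `v` is at least `δ`
while its spatial gradient is `ε` times a vector of norm at most `1`; with `‖u‖ ≤ M` and
`δ = ε (M + 1)` the transport operator is then at least `ε > 0`. Hence the maximum sits at
`t = 0`; let `ε → 0`. Applying the bound to `ω` and `-ω` gives the two-sided estimate.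
-/

open Set Filter Topology Real Function

theorem HasDerivAt.nonneg_of_isMaxOn_Icc {g : ℝ → ℝ} {g' a b t : ℝ} (hg : HasDerivAt g g' t)
    (hmax : IsMaxOn g (Icc a b) t) (ht : t ∈ Ioc a b) : 0 ≤ g' := by
  have hloc : IsLocalMaxOn g (Iic t) t := mem_of_superset (Icc_mem_nhdsLE_of_mem ht) hmax
  have hseg : segment ℝ t (t + -1) ⊆ Iic t :=
    (convex_Iic t).segment_subset self_mem_Iic (by simp)
  simpa using hloc.hasFDerivWithinAt_nonpos hg.hasFDerivAt.hasFDerivWithinAt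
    (mem_posTangentConeAt_of_segment_subset hseg)

section Uncurry
variable {𝕜 E F G : Type*} [NontriviallyNormedField 𝕜]
  [NormedAddCommGroup E] [NormedSpace 𝕜 E] [NormedAddCommGroup F] [NormedSpace 𝕜 F]
  [NormedAddCommGroup G] [NormedSpace 𝕜 G]
  {f : E → F → G}

theorem Differentiable.uncurry_left (x : E) (hf : Differentiable 𝕜 (uncurry f)) :
    Differentiable 𝕜 (f x) :=
  hf.comp ((differentiable_const x).prodMk differentiable_id)

theorem Differentiable.uncurry_right (y : F) (hf : Differentiable 𝕜 (uncurry f)) :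
    Differentiable 𝕜 fun x => f x y :=
  hf.comp (differentiable_id.prodMk (differentiable_const y))

end Uncurry

theorem IsCompact.exists_isMaxOn_prod_univ {X E : Type*} [TopologicalSpace X] [T2Space X]
    [NormedAddCommGroup E] [ProperSpace E] {K : Set X} (hK : IsCompact K) (hne : K.Nonempty)
    {W : X × E → ℝ} (hW : ContinuousOn W (K ×ˢ univ)) {C ε : ℝ} (hε : 0 < ε)
    (hbound : ∀ q ∈ K ×ˢ univ, W q ≤ C - ε * ‖q.2‖) :
    ∃ q ∈ K ×ˢ univ, IsMaxOn W (K ×ˢ univ) q := by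
  obtain ⟨k, hk⟩ := hne
  have hk0 : ((k, 0) : X × E) ∈ K ×ˢ univ := ⟨hk, mem_univ _⟩
  refine hW.exists_isMaxOn' (hK.isClosed.prod isClosed_univ) hk0 ?_
  rw [Filter.Eventually, mem_inf_principal, mem_cocompact]
  refine ⟨K ×ˢ Metric.closedBall 0 ((C - W (k, 0)) / ε),
    hK.prod (isCompact_closedBall _ _), fun q hqK hq => ?_⟩
  have hfar : (C - W (k, 0)) / ε < ‖q.2‖ := by
    by_contra! hle
    exact hqK ⟨hq.1, mem_closedBall_zero_iff.2 hle⟩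
  have hWq := hbound q hq
  rw [div_lt_iff₀ hε] at hfar
  simp only [mem_ofPred_eq]
  linarith

section Penalty
variable {E : Type*} [NormedAddCommGroup E] [InnerProductSpace ℝ E]

theorem hasFDerivAt_sqrt_one_add_norm_sq (x : E) :
    HasFDerivAt (fun y : E => √(1 + ‖y‖ ^ 2))
      ((√(1 + ‖x‖ ^ 2))⁻¹ • innerSL ℝ x) x := by
  have h := ((hasStrictFDerivAt_norm_sq x).hasFDerivAt.const_add 1).sqrt (by positivity)
  convert h using 1
  rw [← Nat.cast_smul_eq_nsmul ℝ, smul_smul, Nat.cast_ofNat]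
  congr 1
  field_simp

theorem norm_fderiv_sqrt_one_add_norm_sq_le (x : E) :
    ‖fderiv ℝ (fun y : E => √(1 + ‖y‖ ^ 2)) x‖ ≤ 1 := by
  rw [(hasFDerivAt_sqrt_one_add_norm_sq x).fderiv, norm_smul, innerSL_apply_norm, norm_inv,
    Real.norm_of_nonneg (sqrt_nonneg _), inv_mul_le_one₀ (by positivity)]
  exact le_sqrt_of_sq_le (by linarith)

noncomputable def penalized (v : ℝ → E → ℝ) (δ ε : ℝ) (q : ℝ × E) : ℝ :=
  v q.1 q.2 - δ * q.1 - ε * √(1 + ‖q.2‖ ^ 2)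

theorem le_deriv_add_fderiv_of_isMaxOn_penalized {v : ℝ → E → ℝ} {δ ε t₀ t : ℝ}
    {x : E} (hv : Differentiable ℝ (uncurry v)) (hε : 0 ≤ ε) (ht : t ∈ Ioc 0 t₀)
    (hmax : IsMaxOn (penalized v δ ε) (Icc 0 t₀ ×ˢ univ) (t, x)) (w : E) :
    δ - ε * ‖w‖ ≤ deriv (fun s => v s x) t + fderiv ℝ (v t) x w := by
  have htime : δ ≤ deriv (fun s => v s x) t := by
    have hd : HasDerivAt (fun s => penalized v δ ε (s, x))
        (deriv (fun s => v s x) t - δ) t := by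
      simp only [penalized]
      exact (((hv.uncurry_right x).differentiableAt.hasDerivAt).fun_sub
          ((hasDerivAt_id t).const_mul δ |>.congr_deriv (mul_one δ))).sub_const
        (ε * √(1 + ‖x‖ ^ 2))
    linarith [hd.nonneg_of_isMaxOn_Icc (fun s hs => hmax ⟨hs, mem_univ x⟩) ht]
  have hspace : fderiv ℝ (v t) x = ε • fderiv ℝ (fun y : E => √(1 + ‖y‖ ^ 2)) x := by
    have hd : HasFDerivAt (fun y => penalized v δ ε (t, y))
        (fderiv ℝ (v t) x - ε • fderiv ℝ (fun y : E => √(1 + ‖y‖ ^ 2)) x) x := by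
      simp only [penalized]
      exact (((hv.uncurry_left t).differentiableAt.hasFDerivAt).sub_const (δ * t)).fun_sub
          ((hasFDerivAt_sqrt_one_add_norm_sq x).differentiableAt.hasFDerivAt.const_mul ε)
    have hloc : IsLocalMax (fun y => penalized v δ ε (t, y)) x :=
      Eventually.of_forall fun y => hmax ⟨Ioc_subset_Icc_self ht, mem_univ y⟩
    exact sub_eq_zero.1 (hloc.hasFDerivAt_eq_zero hd)
  have hw : -‖w‖ ≤ fderiv ℝ (fun y : E => √(1 + ‖y‖ ^ 2)) x w := by
    refine neg_le_of_abs_le ?_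
    calc _ ≤ _ * ‖w‖ := ContinuousLinearMap.le_opNorm _ w
      _ ≤ 1 * ‖w‖ := by gcongr; exact norm_fderiv_sqrt_one_add_norm_sq_le x
      _ = ‖w‖ := one_mul _
  rw [hspace, smul_apply, smul_eq_mul]
  linarith [mul_le_mul_of_nonneg_left hw hε]

end Penalty

section Transport
variable {E : Type*} [NormedAddCommGroup E] [InnerProductSpace ℝ E] [FiniteDimensional ℝ E]
  {u : ℝ → E → E} {M C A t₀ : ℝ}

theorem le_add_of_transport_subsolution {v : ℝ → E → ℝ} {ε : ℝ}
    (hv : Differentiable ℝ (uncurry v)) (hu : ∀ t x, ‖u t x‖ ≤ M)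
    (hC : ∀ t ∈ Icc 0 t₀, ∀ x, v t x ≤ C) (hA : ∀ x, v 0 x ≤ A)
    (hsub : ∀ t ∈ Ioc 0 t₀, ∀ x,
      deriv (fun s => v s x) t + fderiv ℝ (v t) x (u t x) ≤ 0)
    (ht₀ : 0 ≤ t₀) (hε : 0 < ε) (x₀ : E) :
    v t₀ x₀ ≤ A + ε * ((M + 1) * t₀ + √(1 + ‖x₀‖ ^ 2)) := by
  have hM : 0 ≤ M := (norm_nonneg _).trans (hu 0 0)
  have hbound :
      ∀ q ∈ Icc 0 t₀ ×ˢ univ, penalized v (ε * (M + 1)) ε q ≤ C - ε * ‖q.2‖ := by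
    rintro ⟨t, x⟩ ⟨ht, -⟩
    have hdrift : 0 ≤ ε * (M + 1) * t := mul_nonneg (mul_nonneg hε.le (by linarith)) ht.1
    have hx : ε * ‖x‖ ≤ ε * √(1 + ‖x‖ ^ 2) :=
      mul_le_mul_of_nonneg_left (le_sqrt_of_sq_le (by linarith)) hε.le
    simp only [penalized]
    linarith [hC t ht x]
  have hcont : Continuous (penalized v (ε * (M + 1)) ε) := by
    unfold penalized
    exact (hv.continuous.sub (continuous_const.mul continuous_fst)).sub (by fun_prop)
  obtain ⟨⟨t, x⟩, ⟨ht, -⟩, hmax⟩ := isCompact_Icc.exists_isMaxOn_prod_univ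
    (nonempty_Icc.2 ht₀) hcont.continuousOn hε hbound
  rcases ht.1.eq_or_lt with rfl | htpos
  · have hle :
        penalized v (ε * (M + 1)) ε (t₀, x₀) ≤ penalized v (ε * (M + 1)) ε (0, x) :=
      hmax ⟨⟨ht₀, le_rfl⟩, mem_univ x₀⟩
    simp only [penalized] at hle
    linarith [hA x, mul_nonneg hε.le (sqrt_nonneg (1 + ‖x‖ ^ 2))]
  · have hpos := le_deriv_add_fderiv_of_isMaxOn_penalized hv hε.le ⟨htpos, ht.2⟩ hmax (u t x)
    linarith [hsub t ⟨htpos, ht.2⟩ x, mul_le_mul_of_nonneg_left (hu t x) hε.le]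

theorem le_of_transport_subsolution {v : ℝ → E → ℝ}
    (hv : Differentiable ℝ (uncurry v)) (hu : ∀ t x, ‖u t x‖ ≤ M)
    (hC : ∀ t ∈ Icc 0 t₀, ∀ x, v t x ≤ C) (hA : ∀ x, v 0 x ≤ A)
    (hsub : ∀ t ∈ Ioc 0 t₀, ∀ x,
      deriv (fun s => v s x) t + fderiv ℝ (v t) x (u t x) ≤ 0)
    (ht₀ : 0 ≤ t₀) (x₀ : E) : v t₀ x₀ ≤ A := by
  set K := (M + 1) * t₀ + √(1 + ‖x₀‖ ^ 2)
  have hlim : Tendsto (fun ε => A + ε * K) (𝓝[>] 0) (𝓝 A) := by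
    have h := (by fun_prop : Continuous fun ε : ℝ => A + ε * K).tendsto 0
    simpa using h.mono_left nhdsWithin_le_nhds
  exact ge_of_tendsto hlim (eventually_nhdsWithin_of_forall fun ε hε =>
    le_add_of_transport_subsolution hv hu hC hA hsub ht₀ hε x₀)

theorem le_of_damped_transport_subsolution {ω : ℝ → E → ℝ} {α F : ℝ} (hα : α ≠ 0)
    (hω : Differentiable ℝ (uncurry ω)) (hu : ∀ t x, ‖u t x‖ ≤ M)
    (hC : ∀ t x, ω t x ≤ C) (hA : ∀ x, ω 0 x ≤ A)
    (hsub : ∀ t ∈ Ioc 0 t₀, ∀ x,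
      deriv (fun s => ω s x) t + α * ω t x + fderiv ℝ (ω t) x (u t x) ≤ F)
    (ht₀ : 0 ≤ t₀) (x : E) :
    ω t₀ x ≤ F / α + exp (-α * t₀) * (A - F / α) := by
  set v : ℝ → E → ℝ := fun t x => exp (α * t) * (ω t x - F / α)
  have hv : Differentiable ℝ (uncurry v) :=
    (differentiable_exp.comp (differentiable_fst.const_mul α)).mul (hω.sub_const _)
  have hderiv : ∀ t x, deriv (fun s => v s x) t =
      exp (α * t) * (α * (ω t x - F / α) + deriv (fun s => ω s x) t) := by
    intro t x
    have hexp : HasDerivAt (fun s => exp (α * s)) (exp (α * t) * α) t := by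
      simpa using ((hasDerivAt_id t).const_mul α).exp
    refine (hexp.fun_mul
      ((hω.uncurry_right x).differentiableAt.hasDerivAt.sub_const (F / α))).deriv.trans ?_
    ring
  have hfderiv : ∀ t x, fderiv ℝ (v t) x = exp (α * t) • fderiv ℝ (ω t) x := fun t x =>
    (((hω.uncurry_left t).differentiableAt.hasFDerivAt.sub_const (F / α)).const_mul _).fderiv
  have hvC : ∀ t ∈ Icc 0 t₀, ∀ x, v t x ≤ exp (|α| * t₀) * |C - F / α| := by
    intro t ht x
    have hαt : α * t ≤ |α| * t₀ := by
      nlinarith [le_abs_self α, abs_nonneg α, ht.1, ht.2]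
    calc v t x ≤ exp (α * t) * |C - F / α| :=
          mul_le_mul_of_nonneg_left ((sub_le_sub_right (hC t x) _).trans (le_abs_self _))
            (exp_pos _).le
      _ ≤ exp (|α| * t₀) * |C - F / α| := by gcongr
  have hvA : ∀ x, v 0 x ≤ A - F / α := fun x => by
    simp only [v, mul_zero, exp_zero, one_mul]
    linarith [hA x]
  have hvsub :
      ∀ t ∈ Ioc 0 t₀, ∀ x, deriv (fun s => v s x) t + fderiv ℝ (v t) x (u t x) ≤ 0 := by
    intro t ht x
    rw [hderiv, hfderiv, smul_apply, smul_eq_mul]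
    calc _ = exp (α * t) *
          (deriv (fun s => ω s x) t + α * ω t x + fderiv ℝ (ω t) x (u t x) - F) := by
          field_simp
          ring
      _ ≤ 0 := mul_nonpos_of_nonneg_of_nonpos (exp_pos _).le (by linarith [hsub t ht x])
  have key := le_of_transport_subsolution hv hu hvC hvA hvsub ht₀ x
  have hexp : exp (-α * t₀) * exp (α * t₀) = 1 := by rw [← exp_add]; simp
  have h := mul_le_mul_of_nonneg_left key (exp_pos (-α * t₀)).le
  rw [← mul_assoc, hexp, one_mul] at h
  linarith

theorem abs_le_of_damped_transport {ω f : ℝ → E → ℝ} {α F : ℝ} (hα : α ≠ 0)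
    (hω : Differentiable ℝ (uncurry ω)) (hu : ∀ t x, ‖u t x‖ ≤ M)
    (hC : ∀ t x, |ω t x| ≤ C) (hA : ∀ x, |ω 0 x| ≤ A)
    (heq : ∀ t ∈ Ioc 0 t₀, ∀ x,
      deriv (fun s => ω s x) t + α * ω t x + fderiv ℝ (ω t) x (u t x) = f t x)
    (hf : ∀ t ∈ Ioc 0 t₀, ∀ x, |f t x| ≤ F) (ht₀ : 0 ≤ t₀) (x : E) :
    |ω t₀ x| ≤ F / α + exp (-α * t₀) * (A - F / α) := by
  refine abs_le.2 ⟨?_, ?_⟩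
  · have hneg := le_of_damped_transport_subsolution (ω := fun t x => -ω t x) (F := F)
      hα hω.neg hu (fun t x => (neg_le_abs _).trans (hC t x))
      (fun x => (neg_le_abs _).trans (hA x))
      (fun t ht x => by
        rw [deriv.fun_neg, fderiv_fun_neg, neg_apply]
        linarith [heq t ht x, neg_le_abs (f t x), hf t ht x]) ht₀ x
    linarith
  · exact le_of_damped_transport_subsolution hα hω hu
      (fun t x => (le_abs_self _).trans (hC t x)) (fun x => (le_abs_self _).trans (hA x))
      (fun t ht x => (heq t ht x).trans_le ((le_abs_self _).trans (hf t ht x))) ht₀ x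

end Transport

theorem le_biSup_iSup_of_forall_le {ι κ : Type*} {g : ι → κ → ℝ} {S : Set ι} {M : ℝ}
    (hM : ∀ i k, g i k ≤ M) {i : ι} (hi : i ∈ S) (k : κ) :
    g i k ≤ ⨆ i ∈ S, ⨆ k, g i k := by
  have hbdd : ∀ j, BddAbove (range (g j)) := fun j => ⟨M, forall_mem_range.2 (hM j)⟩
  have hsup : ∀ j, ⨆ (_ : j ∈ S), ⨆ k, g j k ≤ max M 0 := fun j =>
    Real.iSup_le (fun _ => Real.iSup_le (fun k => (hM j k).trans (le_max_left _ _))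
      (le_max_right _ _)) (le_max_right _ _)
  calc g i k ≤ ⨆ k, g i k := le_ciSup (hbdd i) k
    _ = ⨆ (_ : i ∈ S), ⨆ k, g i k := (ciSup_pos (f := fun _ => ⨆ k, g i k) hi).symm
    _ ≤ ⨆ i ∈ S, ⨆ k, g i k := le_ciSup ⟨max M 0, forall_mem_range.2 hsup⟩ i

theorem vorticity_maximum_principle_general (α T : ℝ) (hα : 0 < α)
    (u : ℝ → EuclideanSpace ℝ (Fin 2) → EuclideanSpace ℝ (Fin 2))
    (f : ℝ → EuclideanSpace ℝ (Fin 2) → ℝ)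
    (ω : ℝ → EuclideanSpace ℝ (Fin 2) → ℝ)
    (hu_bdd : ∃ M, ∀ t x, ‖u t x‖ ≤ M)
    (hf_bdd : ∃ M, ∀ t x, |f t x| ≤ M)
    (hω_smooth : ContDiff ℝ 1 (fun q : ℝ × EuclideanSpace ℝ (Fin 2) => ω q.1 q.2))
    (hω_bdd : ∃ M, ∀ t x, |ω t x| ≤ M)
    (heq : ∀ t ∈ Set.Icc (0 : ℝ) T, ∀ x,
      deriv (fun s => ω s x) t + α * ω t x +
        fderiv ℝ (fun y => ω t y) x (u t x) = f t x) :
    ∀ t ∈ Set.Icc (0 : ℝ) T,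
      (⨆ x, |ω t x|) ≤ Real.exp (-α * t) * (⨆ x, |ω 0 x|) +
        (1 / α) * ⨆ s ∈ Set.Icc (0 : ℝ) T, ⨆ x, |f s x| := by
  intro t ht
  obtain ⟨M, hu⟩ := hu_bdd
  obtain ⟨Mf, hf⟩ := hf_bdd
  obtain ⟨C, hC⟩ := hω_bdd
  set A := ⨆ x, |ω 0 x|
  set F := ⨆ s ∈ Icc 0 T, ⨆ x, |f s x|
  have hA : ∀ x, |ω 0 x| ≤ A := le_ciSup ⟨C, forall_mem_range.2 (hC 0)⟩
  have hF : ∀ s ∈ Icc 0 T, ∀ x, |f s x| ≤ F := fun s hs => le_biSup_iSup_of_forall_le hf hs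
  have hFα : 0 ≤ F / α := div_nonneg ((abs_nonneg _).trans (hF t ht 0)) hα.le
  have hsub : Ioc 0 t ⊆ Icc 0 T := fun s hs => ⟨hs.1.le, hs.2.trans ht.2⟩
  refine ciSup_le fun x => ?_
  calc |ω t x| ≤ F / α + exp (-α * t) * (A - F / α) :=
        abs_le_of_damped_transport hα.ne' (hω_smooth.differentiable one_ne_zero) hu hC hA
          (fun s hs => heq s (hsub hs)) (fun s hs => hF s (hsub hs)) ht.1 x
    _ ≤ exp (-α * t) * A + 1 / α * F := by
        rw [one_div_mul_eq_div]
        linarith [mul_nonneg (exp_pos (-α * t)).le hFα]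

theorem vorticity_maximum_principle (α T : ℝ) (hα : 0 < α) (hT : 0 < T)
    (u : ℝ → EuclideanSpace ℝ (Fin 2) → EuclideanSpace ℝ (Fin 2))
    (f : ℝ → EuclideanSpace ℝ (Fin 2) → ℝ)
    (ω : ℝ → EuclideanSpace ℝ (Fin 2) → ℝ)
    (hu_cont : Continuous (fun q : ℝ × EuclideanSpace ℝ (Fin 2) => u q.1 q.2))
    (hu_bdd : ∃ M, ∀ t x, ‖u t x‖ ≤ M)
    (hf_cont : Continuous (fun q : ℝ × EuclideanSpace ℝ (Fin 2) => f q.1 q.2))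
    (hf_bdd : ∃ M, ∀ t x, |f t x| ≤ M)
    (hω_smooth : ContDiff ℝ 1 (fun q : ℝ × EuclideanSpace ℝ (Fin 2) => ω q.1 q.2))
    (hω_bdd : ∃ M, ∀ t x, |ω t x| ≤ M)
    (heq : ∀ t ∈ Set.Icc (0 : ℝ) T, ∀ x,
      deriv (fun s => ω s x) t + α * ω t x +
        fderiv ℝ (fun y => ω t y) x (u t x) = f t x) :
    ∀ t ∈ Set.Icc (0 : ℝ) T,
      (⨆ x, |ω t x|) ≤ Real.exp (-α * t) * (⨆ x, |ω 0 x|) +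
        (1 / α) * ⨆ s ∈ Set.Icc (0 : ℝ) T, ⨆ x, |f s x| :=
  vorticity_maximum_principle_general α T hα u f ω hu_bdd hf_bdd hω_smooth hω_bdd heq
end
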